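/- arXiv:2303.11766 — 5 statements merged into one kernel-verified Lean document; each statement's English description precedes it below -/
import Mathlib

section
/- For every integer k ≥ 1, if a graph G contains no induced copy of the star S_k (the star with k+1 vertices), then χ(G) ≤ ω(G)^k. -/
open SimpleGraph

/-- The complete `d`-partite graph `K_d(t)` with parts of size `t`. -/
def KK (d t : ℕ) : SimpleGraph (Σ _ : Fin d, Fin t) :=
  SimpleGraph.completeMultipartiteGraph fun _ : Fin d => Fin t

/-- `G` contains `H` as a (not necessarily induced) subgraph. -/
def ContainsSub {α β : Type*} (H : SimpleGraph α) (G : SimpleGraph β) : Prop :=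
  ∃ f : H →g G, Function.Injective f

/-- The subgraph of `G` induced on `Y` is `t`-connected: it has more than `t`
vertices and deleting any fewer than `t` vertices leaves it connected. -/
def KConn {V : Type*} (G : SimpleGraph V) (t : ℕ) (Y : Set V) : Prop :=
  t < Y.ncard ∧ ∀ S : Finset V, ↑S ⊆ Y → S.card < t → (G.induce (Y \ ↑S)).Connected

/-- A `t`-biclique `(X, Y)`. -/
def IsBiclique {V : Type*} (G : SimpleGraph V) (t : ℕ) (X Y : Set V) : Prop :=
  Disjoint X Y ∧ X.ncard = t ∧ ∀ x ∈ X, ∀ y ∈ Y, G.Adj x y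

/-- A `(p,t)`-balloon `(P, Y)`, where `P` is the induced path `v 0 - … - v (p-1)`. -/
def IsBalloon {V : Type*} (G : SimpleGraph V) (p t : ℕ) (v : Fin p → V) (Y : Set V) : Prop :=
  Function.Injective v ∧
  (∀ i j : Fin p, G.Adj (v i) (v j) ↔ (i.val + 1 = j.val ∨ j.val + 1 = i.val)) ∧
  (∀ i : Fin p, i.val + 1 < p → v i ∉ Y) ∧
  (∀ i : Fin p, i.val + 1 = p → v i ∈ Y) ∧
  (∀ i : Fin p, i.val + 2 < p → ∀ y ∈ Y, ¬ G.Adj (v i) y) ∧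
  (∀ i : Fin p, i.val + 2 = p → ∀ y ∈ Y, G.Adj (v i) y → ∀ j : Fin p, j.val + 1 = p → y = v j) ∧
  KConn G t Y

/-- The set `Z` of vertices of `Y` nonadjacent to the last vertex of the path. -/
def BalloonZ {V : Type*} (G : SimpleGraph V) (p : ℕ) (v : Fin p → V) (Y : Set V) : Set V :=
  {y ∈ Y | ∀ i : Fin p, i.val + 1 = p → ¬ G.Adj (v i) y}

/-- The value of a balloon: the chromatic number of `G[Z]`. -/
noncomputable def BalloonValue {V : Type*} (G : SimpleGraph V) (p : ℕ) (v : Fin p → V)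
    (Y : Set V) : ℕ∞ :=
  (G.induce (BalloonZ G p v Y)).chromaticNumber

/-- The broom: a path on `p` vertices with `r` extra leaves attached to the end `0`. -/
def broomGraph (p r : ℕ) : SimpleGraph (Fin p ⊕ Fin r) :=
  SimpleGraph.fromRel fun a b => match a, b with
    | Sum.inl i, Sum.inl j => (pathGraph p).Adj i j
    | Sum.inl i, Sum.inr _ => i.val = 0
    | _, _ => False

/-- Complete join of two graphs. -/
def graphJoin {α β : Type*} (A : SimpleGraph α) (B : SimpleGraph β) : SimpleGraph (α ⊕ β) :=
  SimpleGraph.fromRel fun a b => match a, b with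
    | Sum.inl u, Sum.inl v => A.Adj u v
    | Sum.inr u, Sum.inr v => B.Adj u v
    | _, _ => True

/-- `H` is multibounding. -/
def Multibounding {W : Type*} (H : SimpleGraph W) : Prop :=
  ∀ d : ℕ, 1 ≤ d → ∃ f : Polynomial ℕ, ∀ t : ℕ, 1 ≤ t →
    ∀ (V : Type) [Fintype V] (G : SimpleGraph V),
      IsEmpty (H ↪g G) → ¬ ContainsSub (KK d t) G →
        G.chromaticNumber ≤ ((f.eval t : ℕ) : ℕ∞)

/-- `H` is near-Esperet. -/
def NearEsperet {W : Type*} (H : SimpleGraph W) : Prop :=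
  ∃ c : ℝ, 0 < c ∧ ∀ d : ℕ, 0 < d →
    ∀ (V : Type) [Fintype V] (G : SimpleGraph V),
      IsEmpty (H ↪g G) → G.CliqueFree d →
        (G.chromaticNumber.toNat : ℝ) ≤ (d : ℝ) ^ (c * Real.logb 2 d)


section MyAux
open Finset

/-- Binomial bound: `(a+b).choose a ≤ (b+1)^a`. -/
lemma my_binom_le : ∀ b a : ℕ, (a + b).choose a ≤ (b + 1) ^ a := by
  intro b
  induction b with
  | zero => intro a; simp
  | succ b ih =>
    intro a
    induction a with
    | zero => simp
    | succ a iha =>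
      have h1 : (a + (b + 1)).choose a ≤ (b + 2) ^ a := iha
      have h2 : (a + 1 + b).choose (a + 1) ≤ (b + 1) ^ (a + 1) := ih (a + 1)
      have hp : (a + 1 + (b + 1)).choose (a + 1)
          = (a + (b + 1)).choose a + (a + 1 + b).choose (a + 1) := by
        have : a + 1 + (b + 1) = (a + (b + 1)) + 1 := by omega
        rw [this, Nat.choose_succ_succ]
        congr 1
        · congr 1; omega
      have h3 : (b + 1) ^ (a + 1) ≤ (b + 1) * (b + 2) ^ a := by
        rw [pow_succ, mul_comm]
        exact Nat.mul_le_mul_left _ (Nat.pow_le_pow_left (by omega) a)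
      calc (a + 1 + (b + 1)).choose (a + 1)
          ≤ (b + 2) ^ a + (b + 1) * (b + 2) ^ a := by omega
        _ = (b + 2) ^ (a + 1) := by ring

lemma my_empty_of_cfo_one {V : Type} (G : SimpleGraph V) (s : Finset V)
    (h : G.CliqueFreeOn ↑s 1) : s = ∅ := by
  by_contra hne
  obtain ⟨v, hv⟩ := Finset.nonempty_of_ne_empty hne
  exact h (by simpa using hv) (SimpleGraph.isNClique_singleton.mpr rfl)

lemma my_ramsey {V : Type} [DecidableEq V] (G : SimpleGraph V) [DecidableRel G.Adj] :
    ∀ (n a b : ℕ), a + b ≤ n → ∀ s : Finset V,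
      Gᶜ.CliqueFreeOn ↑s (a + 1) → G.CliqueFreeOn ↑s (b + 1) →
      s.card < (a + b).choose a := by
  intro n
  induction n with
  | zero =>
    intro a b hab s hA hB
    obtain ⟨rfl, rfl⟩ : a = 0 ∧ b = 0 := by omega
    rw [my_empty_of_cfo_one _ _ hA]
    simp
  | succ m ih =>
    intro a b hab s hA hB
    match a, b with
    | 0, b =>
      rw [my_empty_of_cfo_one _ _ hA]
      simpa using Nat.choose_pos (Nat.zero_le b)
    | a + 1, 0 =>
      rw [my_empty_of_cfo_one _ _ hB]
      simpa using Nat.choose_pos (by omega : a + 1 ≤ a + 1 + 0)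
    | a + 1, b + 1 =>
      rcases s.eq_empty_or_nonempty with rfl | ⟨v, hv⟩
      · simpa using Nat.choose_pos (by omega : a + 1 ≤ a + 1 + (b + 1))
      · set N : Finset V := s.filter (fun u => G.Adj v u) with hNdef
        set M : Finset V := s.filter (fun u => ¬ G.Adj v u ∧ u ≠ v) with hMdef
        have hNsub : N ⊆ s := Finset.filter_subset _ _
        have hMsub : M ⊆ s := Finset.filter_subset _ _
        -- N is (b+1)-clique-free in G
        have hN2 : G.CliqueFreeOn ↑N (b + 1) := by
          intro t ht hcl
          refine hB (t := insert v t) ?_ (hcl.insert fun u hu => ?_)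
          · rw [Finset.coe_insert]
            exact Set.insert_subset (by exact_mod_cast hv)
              (ht.trans (by exact_mod_cast hNsub))
          · have := ht (Finset.mem_coe.mpr hu)
            rw [Finset.mem_coe, hNdef, Finset.mem_filter] at this
            exact this.2
        have hN1 : Gᶜ.CliqueFreeOn ↑N (a + 1 + 1) :=
          fun t ht => hA (ht.trans (Finset.coe_subset.mpr hNsub))
        -- M is (a+1)-clique-free in Gᶜ
        have hM1 : Gᶜ.CliqueFreeOn ↑M (a + 1) := by
          intro t ht hcl
          refine hA (t := insert v t) ?_ (hcl.insert fun u hu => ?_)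
          · rw [Finset.coe_insert]
            exact Set.insert_subset (by exact_mod_cast hv)
              (ht.trans (by exact_mod_cast hMsub))
          · have := ht (Finset.mem_coe.mpr hu)
            rw [Finset.mem_coe, hMdef, Finset.mem_filter] at this
            exact G.compl_adj v u |>.mpr ⟨this.2.2.symm, fun hadj => this.2.1 hadj⟩
        have hM2 : G.CliqueFreeOn ↑M (b + 1 + 1) :=
          fun t ht => hB (ht.trans (Finset.coe_subset.mpr hMsub))
        have hNc : N.card < (a + 1 + b).choose (a + 1) :=
          ih (a + 1) b (by omega) N hN1 hN2
        have hMc : M.card < (a + (b + 1)).choose a :=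
          ih a (b + 1) (by omega) M hM1 hM2
        have hcover : s ⊆ insert v (N ∪ M) := by
          intro u hu
          rcases eq_or_ne u v with rfl | hne
          · exact Finset.mem_insert_self _ _
          · refine Finset.mem_insert_of_mem (Finset.mem_union.mpr ?_)
            by_cases hadj : G.Adj v u
            · exact Or.inl (Finset.mem_filter.mpr ⟨hu, hadj⟩)
            · exact Or.inr (Finset.mem_filter.mpr ⟨hu, hadj, hne⟩)
        have hcard : s.card ≤ 1 + (N.card + M.card) := by
          calc s.card ≤ (insert v (N ∪ M)).card := Finset.card_le_card hcover
            _ ≤ (N ∪ M).card + 1 := Finset.card_insert_le _ _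
            _ ≤ N.card + M.card + 1 := by
                have := Finset.card_union_le N M; omega
            _ = 1 + (N.card + M.card) := by omega
        have hpascal : (a + 1 + (b + 1)).choose (a + 1)
            = (a + (b + 1)).choose a + (a + 1 + b).choose (a + 1) := by
          have h1 : a + 1 + (b + 1) = (a + (b + 1)) + 1 := by omega
          rw [h1, Nat.choose_succ_succ]
          congr 2
          omega
        omega

lemma my_greedy {V : Type} [Fintype V] [DecidableEq V] (G : SimpleGraph V)
    [DecidableRel G.Adj] {n : ℕ} (hn : 0 < n) (hdeg : ∀ v, G.degree v < n) :
    ∀ s : Finset V, ∃ C : V → Fin n,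
      ∀ u ∈ s, ∀ w ∈ s, G.Adj u w → C u ≠ C w := by
  intro s
  induction s using Finset.induction_on with
  | empty => exact ⟨fun _ => ⟨0, hn⟩, by simp⟩
  | @insert a s ha ih =>
    obtain ⟨C, hC⟩ := ih
    set used : Finset (Fin n) := (G.neighborFinset a).image C with husedDef
    have hused : used.card < n := by
      calc used.card ≤ (G.neighborFinset a).card := Finset.card_image_le
        _ < n := hdeg a
    obtain ⟨c, hc⟩ : ∃ c : Fin n, c ∉ used := by
      by_contra hcon
      push_neg at hcon
      have : (Finset.univ : Finset (Fin n)) ⊆ used := fun c _ => hcon c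
      have := Finset.card_le_card this
      simp at this
      omega
    refine ⟨fun u => if u = a then c else C u, ?_⟩
    intro u hu w hw hadj heq
    by_cases hua : u = a <;> by_cases hwa : w = a
    · subst hua; subst hwa; exact G.irrefl hadj
    · subst hua
      simp only [if_pos rfl, if_true, if_neg hwa] at heq
      exact hc (heq ▸ Finset.mem_image_of_mem C ((G.mem_neighborFinset u w).mpr hadj))
    · subst hwa
      simp only [if_neg hua, if_pos rfl, if_true] at heq
      exact hc (heq.symm ▸ Finset.mem_image_of_mem C ((G.mem_neighborFinset w u).mpr hadj.symm))
    · have hu' : u ∈ s := (Finset.mem_insert.mp hu).resolve_left hua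
      have hw' : w ∈ s := (Finset.mem_insert.mp hw).resolve_left hwa
      simp only [if_neg hua, if_neg hwa] at heq
      exact hC u hu' w hw' hadj heq

end MyAux

theorem stmt2 {V : Type} [Fintype V] (G : SimpleGraph V) (k : ℕ) (hk : 1 ≤ k)
    (h : IsEmpty (completeBipartiteGraph (Fin 1) (Fin k) ↪g G)) :
    G.chromaticNumber ≤ ((G.cliqueNum ^ k : ℕ) : ℕ∞) := by
  classical
  obtain ⟨a, rfl⟩ : ∃ a, k = a + 1 := ⟨k - 1, by omega⟩
  cases isEmpty_or_nonempty V with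
  | inl hempty => exact (SimpleGraph.Colorable.of_isEmpty (G := G) _).chromaticNumber_le
  | inr hne =>
    obtain ⟨v0⟩ := hne
    have hw1 : 1 ≤ G.cliqueNum := by
      have hc : G.IsClique ({v0} : Finset V) := by simp
      have := @SimpleGraph.IsClique.card_le_cliqueNum V G _ {v0} hc
      simpa using this
    obtain ⟨b, hb⟩ : ∃ b, G.cliqueNum = b + 1 := ⟨G.cliqueNum - 1, by omega⟩
    have hdeg : ∀ v, G.degree v < G.cliqueNum ^ (a + 1) := by
      intro v
      have hA : Gᶜ.CliqueFreeOn ↑(G.neighborFinset v) (a + 1) := by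
        intro t ht hcl
        have hcard : Fintype.card ↥t = a + 1 := by
          rw [Fintype.card_coe]; exact hcl.card_eq
        let e := Fintype.equivFinOfCardEq hcard
        have hmem : ∀ i : Fin (a + 1), ((e.symm i : ↥t) : V) ∈ t := fun i => (e.symm i).2
        have hadjv : ∀ i, G.Adj v ((e.symm i : ↥t) : V) := by
          intro i
          have := ht (Finset.mem_coe.mpr (hmem i))
          rwa [Finset.mem_coe, SimpleGraph.mem_neighborFinset] at this
        have hnadj : ∀ i j : Fin (a + 1),
            ¬ G.Adj ((e.symm i : ↥t) : V) ((e.symm j : ↥t) : V) := by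
          intro i j hadj
          rcases eq_or_ne i j with rfl | hne
          · exact G.irrefl hadj
          · have hxy : ((e.symm i : ↥t) : V) ≠ ((e.symm j : ↥t) : V) := by
              intro hxy
              exact hne (e.symm.injective (Subtype.coe_injective hxy))
            have := hcl.isClique (Finset.mem_coe.mpr (hmem i)) (Finset.mem_coe.mpr (hmem j)) hxy
            exact ((G.compl_adj _ _).mp this).2 hadj
        refine h.false ⟨⟨Sum.elim (fun _ => v) (fun i => ((e.symm i : ↥t) : V)), ?_⟩, ?_⟩
        · intro x y hxy
          rcases x with i | i <;> rcases y with j | j <;>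
            simp only [Sum.elim_inl, Sum.elim_inr] at hxy
          · rw [Subsingleton.elim i j]
          · exact absurd hxy (G.ne_of_adj (hadjv j))
          · exact absurd hxy.symm (G.ne_of_adj (hadjv i))
          · rw [e.symm.injective (Subtype.coe_injective hxy)]
        · intro x y
          rcases x with i | i <;> rcases y with j | j <;>
            simp only [Function.Embedding.coeFn_mk, Sum.elim_inl, Sum.elim_inr,
              completeBipartiteGraph]
          · exact iff_of_false (G.irrefl (v := v)) (by simp)
          · exact iff_of_true (hadjv j) (by simp)
          · exact iff_of_true (hadjv i).symm (by simp)
          · exact iff_of_false (hnadj i j) (by simp)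
      have hB : G.CliqueFreeOn ↑(G.neighborFinset v) (b + 1) := by
        intro t ht hcl
        have hadjt : ∀ u ∈ t, G.Adj v u := by
          intro u hu
          have := ht (Finset.mem_coe.mpr hu)
          rwa [Finset.mem_coe, SimpleGraph.mem_neighborFinset] at this
        have hclique : G.IsNClique (b + 1 + 1) (insert v t) := hcl.insert hadjt
        have hle := @SimpleGraph.IsClique.card_le_cliqueNum V G _ (insert v t) hclique.isClique
        rw [hclique.card_eq] at hle
        omega
      have hram := my_ramsey G (a + b) a b le_rfl (G.neighborFinset v) hA hB
      calc G.degree v = (G.neighborFinset v).card := rfl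
        _ < (a + b).choose a := hram
        _ ≤ (b + 1) ^ a := my_binom_le b a
        _ = G.cliqueNum ^ a := by rw [hb]
        _ ≤ G.cliqueNum ^ (a + 1) := Nat.pow_le_pow_right hw1 (by omega)
    obtain ⟨C, hC⟩ := my_greedy G (pow_pos hw1 (a + 1)) hdeg Finset.univ
    have hcol : G.Colorable (G.cliqueNum ^ (a + 1)) :=
      ⟨SimpleGraph.Coloring.mk C fun {u w} hadj =>
        hC u (Finset.mem_univ u) w (Finset.mem_univ w) hadj⟩
    exact hcol.chromaticNumber_le
end

section
/- Let G be a graph, t ≥ 1 an integer, Z ⊆ V(G) with G[Z] t-connected, and suppose z_1,…,z_t ∈ Z are distinct vertices such that for each i the set of vertices in Z \ {z_i} nonadjacent to z_i induces a subgraph of chromatic number at most q, and the set of vertices in Z \ {z_1,…,z_t} adjacent to all of z_1,…,z_t induces a subgraph of chromatic number less than s. Then χ(G[Z]) ≤ s + tq. -/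
open SimpleGraph

theorem stmt5 {V : Type} [Fintype V] (G : SimpleGraph V) (q s t : ℕ)
    (hq : 1 ≤ q) (hs : 1 ≤ s) (ht : 1 ≤ t)
    (Z : Set V) (hZ : KConn G t Z)
    (z : Fin t → V) (hzZ : ∀ i, z i ∈ Z) (hzinj : Function.Injective z)
    (h1 : ∀ i, (G.induce {v ∈ Z | v ≠ z i ∧ ¬ G.Adj (z i) v}).chromaticNumber ≤ (q : ℕ∞))
    (h2 : (G.induce {v ∈ Z | (∀ i, v ≠ z i) ∧ ∀ i, G.Adj (z i) v}).chromaticNumber < (s : ℕ∞)) :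
    (G.induce Z).chromaticNumber ≤ ((s + t * q : ℕ) : ℕ∞) := by
  classical
  have hcB : ∀ i, (G.induce {v ∈ Z | v ≠ z i ∧ ¬ G.Adj (z i) v}).Colorable q := fun i =>
    (chromaticNumber_le_iff_colorable).1 (h1 i)
  have hcA : (G.induce {v ∈ Z | (∀ i, v ≠ z i) ∧ ∀ i, G.Adj (z i) v}).Colorable s :=
    (chromaticNumber_le_iff_colorable).1 (le_of_lt h2)
  obtain ⟨cA⟩ := hcA
  have cB : ∀ i, (G.induce {v ∈ Z | v ≠ z i ∧ ¬ G.Adj (z i) v}).Coloring (Fin q) :=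
    fun i => (hcB i).some
  -- proof-free color function for the parts
  set f : Fin t → V → Fin q := fun i w =>
    if h : w ∈ Z ∧ w ≠ z i ∧ ¬ G.Adj (z i) w then cB i ⟨w, h⟩ else ⟨0, hq⟩ with hf
  have hkey : ∀ (i : Fin t) (u v : V), u ∈ Z → v ∈ Z → ¬ G.Adj (z i) u → ¬ G.Adj (z i) v →
      G.Adj u v → f i u ≠ f i v := by
    intro i u v huZ hvZ hnu hnv hadj heq
    by_cases hu1 : u = z i
    · exact hnv (hu1 ▸ hadj)
    by_cases hv1 : v = z i
    · exact hnu (G.adj_symm (hv1 ▸ hadj))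
    · rw [hf] at heq
      simp only [dif_pos (⟨huZ, hu1, hnu⟩ : u ∈ Z ∧ u ≠ z i ∧ ¬ G.Adj (z i) u),
        dif_pos (⟨hvZ, hv1, hnv⟩ : v ∈ Z ∧ v ≠ z i ∧ ¬ G.Adj (z i) v)] at heq
      exact (cB i).valid (by exact hadj) heq
  set col : Z → Fin s ⊕ Fin t × Fin q := fun v =>
    if h : ∃ i, ¬ G.Adj (z i) v.1 then
      Sum.inr (h.choose, f h.choose v.1)
    else
      Sum.inl (cA ⟨v.1, v.2,
        fun i hi => (not_exists.1 h i) (hi ▸ (G.irrefl)),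
        fun i => not_not.1 (not_exists.1 h i)⟩) with hcol
  have hvalid : ∀ {u v : Z}, (G.induce Z).Adj u v → col u ≠ col v := by
    intro u v hadj heq
    have hGadj : G.Adj u.1 v.1 := hadj
    by_cases hu : ∃ i, ¬ G.Adj (z i) u.1 <;> by_cases hv : ∃ i, ¬ G.Adj (z i) v.1 <;>
      simp only [hcol, hu, hv, dif_pos, dif_neg, not_false_iff] at heq
    · obtain ⟨hi, hc⟩ := Prod.mk.injEq _ _ _ _ ▸ Sum.inr.inj heq
      rw [hi] at hc
      exact hkey hv.choose u.1 v.1 u.2 v.2 (hi ▸ hu.choose_spec) hv.choose_spec hGadj hc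
    · exact Sum.inr_ne_inl heq
    · exact Sum.inl_ne_inr heq
    · exact cA.valid (by exact hGadj) (Sum.inl.inj heq)
  have C : (G.induce Z).Coloring (Fin s ⊕ Fin t × Fin q) := SimpleGraph.Coloring.mk col hvalid
  have hcolor := C.colorable
  simp only [Fintype.card_sum, Fintype.card_prod, Fintype.card_fin] at hcolor
  exact hcolor.chromaticNumber_le
end

section
/- Let H be the broom obtained from a p-vertex path by adding r leaves adjacent to one end. If G is H-free and contains a (p,t)-balloon (P,Y) of value at least (dt)^{2r}, where ω(G) < dt, then a contradiction arises; i.e., H-free graphs G with ω(G) < dt contain no (p,t)-balloon of value at least (dt)^{2r}. -/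
open SimpleGraph

/-- Ramsey-type bound: a vertex set with no independent set of size `a+1`
and no clique of size `b+1` has fewer than `(a+b).choose a` elements. -/
lemma my_ram {V : Type} (G : SimpleGraph V) :
    ∀ (n a b : ℕ) (s : Finset V), a + b ≤ n →
      (∀ T ⊆ s, (∀ x ∈ T, ∀ y ∈ T, x ≠ y → ¬ G.Adj x y) → T.card ≤ a) →
      (∀ T ⊆ s, G.IsClique (↑T : Set V) → T.card ≤ b) →
      s.card < (a + b).choose a := by
  classical
  intro n
  induction n with
  | zero =>
    intro a b s hn h1 h2
    rcases s.eq_empty_or_nonempty with rfl | ⟨x, hx⟩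
    · simpa using Nat.choose_pos (Nat.le_add_right a b)
    · have := h1 {x} (by simpa using hx) (by simp)
      simp at this; omega
  | succ n ih =>
    intro a b s hn h1 h2
    rcases s.eq_empty_or_nonempty with rfl | ⟨x, hx⟩
    · simpa using Nat.choose_pos (Nat.le_add_right a b)
    · have ha : 1 ≤ a := by
        have := h1 {x} (by simpa using hx) (by simp); simpa using this
      have hb : 1 ≤ b := by
        have := h2 {x} (by simpa using hx) (by simp [SimpleGraph.isClique_singleton])
        simpa using this
      set s1 := (s.erase x).filter (fun y => G.Adj x y) with hs1
      set s2 := (s.erase x).filter (fun y => ¬ G.Adj x y) with hs2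
      have hpos : 0 < s.card := Finset.card_pos.2 ⟨x, hx⟩
      have hcard : s1.card + s2.card + 1 = s.card := by
        rw [hs1, hs2, Finset.card_filter_add_card_filter_not,
          Finset.card_erase_of_mem hx]
        omega
      -- s1: neighbours of x, cliques shrink
      have b1 : s1.card < (a + (b-1)).choose a := by
        apply ih a (b-1) s1 (by omega)
        · intro T hT hTind
          exact h1 T (hT.trans ((Finset.filter_subset _ _).trans (Finset.erase_subset _ _))) hTind
        · intro T hT hTcl
          have hins : G.IsClique (↑(insert x T) : Set V) := by
            rw [Finset.coe_insert]
            refine hTcl.insert ?_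
            intro b hbT hne
            have := hT hbT
            rw [hs1, Finset.mem_filter] at this
            exact this.2
          have hxT : x ∉ T := by
            intro hxT
            have := hT hxT
            rw [hs1, Finset.mem_filter, Finset.mem_erase] at this
            exact this.1.1 rfl
          have := h2 (insert x T)
            (Finset.insert_subset hx
              (hT.trans ((Finset.filter_subset _ _).trans (Finset.erase_subset _ _)))) hins
          rw [Finset.card_insert_of_notMem hxT] at this
          omega
      -- s2: nonneighbours of x, independent sets shrink
      have b2 : s2.card < ((a-1) + b).choose (a-1) := by
        apply ih (a-1) b s2 (by omega)
        · intro T hT hTind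
          have hxT : x ∉ T := by
            intro hxT
            have := hT hxT
            rw [hs2, Finset.mem_filter, Finset.mem_erase] at this
            exact this.1.1 rfl
          have hins : ∀ u ∈ insert x T, ∀ w ∈ insert x T, u ≠ w → ¬ G.Adj u w := by
            intro u hu w hw hne
            rcases Finset.mem_insert.1 hu with rfl | hu'
            · rcases Finset.mem_insert.1 hw with rfl | hw'
              · exact absurd rfl hne
              · have := hT hw'; rw [hs2, Finset.mem_filter] at this; exact this.2
            · rcases Finset.mem_insert.1 hw with rfl | hw'
              · have := hT hu'; rw [hs2, Finset.mem_filter] at this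
                intro hadj; exact this.2 hadj.symm
              · exact hTind u hu' w hw' hne
          have := h1 (insert x T)
            (Finset.insert_subset hx
              (hT.trans ((Finset.filter_subset _ _).trans (Finset.erase_subset _ _)))) hins
          rw [Finset.card_insert_of_notMem hxT] at this
          omega
        · intro T hT hTcl
          exact h2 T (hT.trans ((Finset.filter_subset _ _).trans (Finset.erase_subset _ _))) hTcl
      have pascal : (a + b).choose a = ((a-1) + b).choose (a-1) + (a + (b-1)).choose a := by
        obtain ⟨a', rfl⟩ : ∃ a', a = a' + 1 := ⟨a - 1, by omega⟩
        have : a' + 1 + b = (a' + b) + 1 := by omega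
        rw [this, Nat.choose_succ_succ (a' + b) a']
        congr 2 <;> omega
      omega

/-- `(a+b).choose a ≤ (b+1)^a`. -/
lemma my_choose_le (b : ℕ) : ∀ a : ℕ, (a + b).choose a ≤ (b + 1) ^ a := by
  intro a
  induction a with
  | zero => simp
  | succ a ih =>
    have key : (a + b).succ * (a + b).choose a = (a + b).succ.choose a.succ * a.succ :=
      Nat.add_one_mul_choose_eq (a + b) a
    have h1 : (a + 1 + b).choose (a + 1) * (a + 1) = (a + b + 1) * (a + b).choose a := by
      have : a + 1 + b = (a + b) + 1 := by omega
      rw [this]; exact ((Nat.add_one_mul_choose_eq (a + b) a).symm)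
    have h2 : (a + b + 1) * (a + b).choose a ≤ ((a + 1) * (b + 1)) * (b + 1) ^ a := by
      calc (a + b + 1) * (a + b).choose a ≤ ((a+1)*(b+1)) * (a + b).choose a := by
            apply Nat.mul_le_mul_right; nlinarith
        _ ≤ ((a + 1) * (b + 1)) * (b + 1) ^ a := Nat.mul_le_mul_left _ ih
    have h3 : (a + 1 + b).choose (a + 1) * (a + 1) ≤ ((b+1) ^ (a+1)) * (a + 1) := by
      rw [h1]
      calc (a + b + 1) * (a + b).choose a ≤ ((a + 1) * (b + 1)) * (b + 1) ^ a := h2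
        _ = ((b+1) ^ (a+1)) * (a+1) := by ring
    exact Nat.le_of_mul_le_mul_right h3 (by omega)


lemma my_greedy' {V : Type} [Fintype V] (R : V → V → Prop) [DecidableRel R] (n : ℕ)
    (hsymm : ∀ a b, R a b → R b a) (hn : 0 < n)
    (hdeg : ∀ z : V, ∀ T : Finset V, (∀ y ∈ T, R z y) → T.card < n) :
    ∃ c : V → Fin n, ∀ a b, R a b → a ≠ b → c a ≠ c b := by
  classical
  have main : ∀ s : Finset V, ∃ c : V → Fin n,
      ∀ a ∈ s, ∀ b ∈ s, R a b → a ≠ b → c a ≠ c b := by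
    intro s
    induction s using Finset.induction_on with
    | empty => exact ⟨fun _ => ⟨0, hn⟩, by simp⟩
    | @insert x s hxs ih =>
      obtain ⟨c, hc⟩ := ih
      set used := (s.filter (fun y => R x y)).image c with hused
      have hcardused : used.card < n := by
        calc used.card ≤ (s.filter (fun y => R x y)).card := Finset.card_image_le
          _ < n := hdeg x _ (fun y hy => (Finset.mem_filter.1 hy).2)
      have : ∃ k : Fin n, k ∉ used := by
        by_contra hcon
        push_neg at hcon
        have : (Finset.univ : Finset (Fin n)) ⊆ used := fun k _ => hcon k
        have := Finset.card_le_card this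
        simp at this; omega
      obtain ⟨k, hk⟩ := this
      refine ⟨Function.update c x k, ?_⟩
      intro a ha b hb hab hne
      rcases Finset.mem_insert.1 ha with rfl | ha' <;>
        rcases Finset.mem_insert.1 hb with rfl | hb'
      · exact absurd rfl hne
      · rw [Function.update_self, Function.update_of_ne (fun h => hxs (by rwa [h] at hb'))]
        intro h
        exact hk (h ▸ Finset.mem_image_of_mem c (Finset.mem_filter.2 ⟨hb', hab⟩))
      · rw [Function.update_self, Function.update_of_ne (fun h => hxs (by rwa [h] at ha'))]
        intro h
        exact hk (h.symm ▸ Finset.mem_image_of_mem c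
          (Finset.mem_filter.2 ⟨ha', hsymm a _ hab⟩))
      · rw [Function.update_of_ne (fun h => hxs (by rwa [h] at ha')),
          Function.update_of_ne (fun h => hxs (by rwa [h] at hb'))]
        exact hc a ha' b hb' hab hne
  obtain ⟨c, hc⟩ := main Finset.univ
  exact ⟨c, fun a b hab hne => hc a (Finset.mem_univ a) b (Finset.mem_univ b) hab hne⟩

lemma broomGraph_adj (p r : ℕ) (a b : Fin p ⊕ Fin r) :
    (broomGraph p r).Adj a b ↔ a ≠ b ∧
      (match a, b with
        | Sum.inl i, Sum.inl j => (i.val + 1 = j.val ∨ j.val + 1 = i.val)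
        | Sum.inl i, Sum.inr _ => i.val = 0
        | Sum.inr _, Sum.inl j => j.val = 0
        | Sum.inr _, Sum.inr _ => False) := by
  rw [broomGraph, SimpleGraph.fromRel_adj]
  rcases a with i | s <;> rcases b with j | s' <;>
    simp [pathGraph_adj] <;> tauto

/-- If we can exhibit an induced `p`-path ending at `c (p-1)` together with `r`
independent leaves at the end avoiding the rest of the path, we get an induced broom. -/
lemma my_broom_embed {V : Type} (G : SimpleGraph V) (p r : ℕ) (hp : 1 ≤ p)
    (hfree : IsEmpty (broomGraph p r ↪g G)) (c : ℕ → V) (A : Finset V)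
    (hcard : A.card = r)
    (hadj_iff : ∀ m m', m ≤ p - 1 → m' ≤ p - 1 →
      (G.Adj (c m) (c m') ↔ (m + 1 = m' ∨ m' + 1 = m)))
    (hcinj : ∀ m ≤ p - 1, ∀ m' ≤ p - 1, c m = c m' → m = m')
    (hleafadj : ∀ a ∈ A, G.Adj (c (p - 1)) a)
    (hleafind : ∀ a ∈ A, ∀ b ∈ A, a ≠ b → ¬ G.Adj a b)
    (hleafpath : ∀ a ∈ A, ∀ m < p - 1, ¬ G.Adj (c m) a ∧ c m ≠ a) :
    False := by
  classical
  have e : Fin r ≃ ↥A := (finCongr hcard.symm).trans A.equivFin.symm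
  set f : Fin p ⊕ Fin r → V := fun x => match x with
    | Sum.inl i => c (p - 1 - i.val)
    | Sum.inr s => ↑(e s) with hf
  have hne_end : ∀ a ∈ A, a ≠ c (p - 1) := by
    intro a ha h
    exact G.loopless.irrefl _ (h ▸ hleafadj a ha)
  have finj : Function.Injective f := by
    rintro (i | s) (i' | s') h <;> simp only [hf] at h
    · have := hcinj (p - 1 - i.val) (by omega) (p - 1 - i'.val) (by omega) h
      have hi := i.isLt; have hi' := i'.isLt
      congr 1; exact Fin.ext (by omega)
    · by_cases h0 : i.val = 0
      · exact absurd h.symm (by simpa [h0] using hne_end _ (e s').2)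
      · exact absurd h ((hleafpath _ (e s').2 (p - 1 - i.val) (by have := i.isLt; omega)).2)
    · by_cases h0 : i'.val = 0
      · exact absurd h (by simpa [h0] using hne_end _ (e s).2)
      · exact absurd h.symm ((hleafpath _ (e s).2 (p - 1 - i'.val) (by have := i'.isLt; omega)).2)
    · have : e s = e s' := Subtype.ext h
      rw [e.injective this]
  have hrel : ∀ a b, G.Adj (f a) (f b) ↔ (broomGraph p r).Adj a b := by
    rintro (i | s) (i' | s') <;> rw [broomGraph_adj] <;> simp only [hf]
    · constructor
      · intro h
        have hi := i.isLt; have hi' := i'.isLt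
        have := (hadj_iff _ _ (by omega) (by omega)).1 h
        refine ⟨?_, by omega⟩
        intro hc'
        injection hc' with hii
        rw [hii] at h; exact G.loopless.irrefl _ h
      · rintro ⟨hne, hcons⟩
        have hi := i.isLt; have hi' := i'.isLt
        apply (hadj_iff _ _ (by omega) (by omega)).2
        have : i.val ≠ i'.val := fun h => hne (by exact congrArg Sum.inl (Fin.ext h))
        omega
    · constructor
      · intro h
        by_cases h0 : i.val = 0
        · exact ⟨by simp, h0⟩
        · exact absurd h ((hleafpath _ (e s').2 (p - 1 - i.val) (by have := i.isLt; omega)).1)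
      · rintro ⟨-, h0⟩
        have : p - 1 - i.val = p - 1 := by omega
        rw [this]
        exact hleafadj _ (e s').2
    · constructor
      · intro h
        by_cases h0 : i'.val = 0
        · exact ⟨by simp, h0⟩
        · exact absurd h.symm
            ((hleafpath _ (e s).2 (p - 1 - i'.val) (by have := i'.isLt; omega)).1)
      · rintro ⟨-, h0⟩
        have : p - 1 - i'.val = p - 1 := by omega
        rw [this]
        exact (hleafadj _ (e s).2).symm
    · constructor
      · intro h
        by_cases hss : s = s'
        · rw [hss] at h; exact absurd h (G.loopless.irrefl _)
        · exact absurd h (hleafind _ (e s).2 _ (e s').2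
            (fun hh => hss (e.injective (Subtype.ext hh))))
      · rintro ⟨-, h⟩; exact h.elim
  exact hfree.elim ⟨⟨f, finj⟩, fun {a b} => hrel a b⟩


lemma my_adjlev {V : Type} {G : SimpleGraph V} {Y : Set V}
    (conn : (G.induce Y).Connected) (w' a b : ↥Y) (h : G.Adj ↑a ↑b) :
    (G.induce Y).dist w' b ≤ (G.induce Y).dist w' a + 1 := by
  have hadj : (G.induce Y).Adj a b := h
  have h1 : (G.induce Y).dist a b = 1 := SimpleGraph.dist_eq_one_iff_adj.2 hadj
  have := conn.dist_triangle (u := w') (v := a) (w := b)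
  omega

lemma my_window {V : Type} (G : SimpleGraph V) (p : ℕ) (v : Fin p → V) (Y : Set V)
    (hp : 1 ≤ p)
    (hvinj : Function.Injective v)
    (hadjv : ∀ i j : Fin p, G.Adj (v i) (v j) ↔ (i.val + 1 = j.val ∨ j.val + 1 = i.val))
    (hout : ∀ i : Fin p, i.val + 1 < p → v i ∉ Y)
    (hfar : ∀ i : Fin p, i.val + 2 < p → ∀ y ∈ Y, ¬ G.Adj (v i) y)
    (hnear : ∀ i : Fin p, i.val + 2 = p → ∀ y ∈ Y, G.Adj (v i) y →
      ∀ j : Fin p, j.val + 1 = p → y = v j)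
    (conn : (G.induce Y).Connected)
    (w' : ↥Y) (hw' : (w' : V) = v ⟨p-1, by omega⟩)
    (u : ↥Y) :
    ∃ c : ℕ → V,
      c (p-1) = ↑u ∧
      (∀ m m', m ≤ p - 1 → m' ≤ p - 1 → (G.Adj (c m) (c m') ↔ (m + 1 = m' ∨ m' + 1 = m))) ∧
      (∀ m ≤ p - 1, ∀ m' ≤ p - 1, c m = c m' → m = m') ∧
      (∀ m < p - 1, ∀ y : ↥Y, (G.induce Y).dist w' u + 1 ≤ (G.induce Y).dist w' y →
        ¬ G.Adj (c m) ↑y ∧ c m ≠ ↑y) ∧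
      (1 ≤ (G.induce Y).dist w' u → ∀ m, m + 1 < p - 1 → ∀ y : ↥Y,
        (G.induce Y).dist w' u ≤ (G.induce Y).dist w' y →
        ¬ G.Adj (c m) ↑y ∧ c m ≠ ↑y) ∧
      (2 ≤ p → 1 ≤ (G.induce Y).dist w' u →
        ∃ x : ↥Y, c (p-2) = ↑x ∧ (G.induce Y).dist w' x + 1 = (G.induce Y).dist w' u) := by
  classical
  have adjYiff : ∀ a b : ↥Y, (G.induce Y).Adj a b ↔ G.Adj ↑a ↑b := fun a b => Iff.rfl
  set j := (G.induce Y).dist w' u with hj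
  obtain ⟨W, hW⟩ := conn.exists_walk_length_eq_dist w' u
  -- level of geodesic vertices
  have lev_up : ∀ i, i ≤ j → (G.induce Y).dist w' (W.getVert i) ≤ i := by
    intro i
    induction i with
    | zero => intro _; rw [W.getVert_zero]; simp [SimpleGraph.dist_self]
    | succ i ih =>
      intro hij
      have h1 := ih (by omega)
      have hadj : (G.induce Y).Adj (W.getVert i) (W.getVert (i+1)) :=
        W.adj_getVert_succ (by omega)
      have h2 := my_adjlev conn w' (W.getVert i) (W.getVert (i+1)) hadj
      omega
  have lev_down : ∀ k, k ≤ j → (G.induce Y).dist (W.getVert (j - k)) u ≤ k := by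
    intro k
    induction k with
    | zero =>
      intro _
      have : W.getVert (j - 0) = u := by
        have : j - 0 = W.length := by omega
        rw [this, W.getVert_length]
      rw [this]; simp [SimpleGraph.dist_self]
    | succ k ih =>
      intro hkj
      have h1 := ih (by omega)
      have hadj : (G.induce Y).Adj (W.getVert (j - (k+1))) (W.getVert (j - (k+1) + 1)) :=
        W.adj_getVert_succ (by omega)
      have harr : j - (k+1) + 1 = j - k := by omega
      rw [harr] at hadj
      have hd : (G.induce Y).dist (W.getVert (j-(k+1))) (W.getVert (j-k)) = 1 :=
        SimpleGraph.dist_eq_one_iff_adj.2 hadj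
      have := conn.dist_triangle (u := W.getVert (j-(k+1))) (v := W.getVert (j-k)) (w := u)
      omega
  have lev : ∀ i, i ≤ j → (G.induce Y).dist w' (W.getVert i) = i := by
    intro i hij
    have h1 := lev_up i hij
    have h2 := lev_down (j - i) (by omega)
    have harr : j - (j - i) = i := by omega
    rw [harr] at h2
    have := conn.dist_triangle (u := w') (v := W.getVert i) (w := u)
    omega
  set cb : ℕ → V := fun m => if h : m < p then v ⟨m, h⟩ else ↑(W.getVert (m - (p-1))) with hcb
  have cb_low : ∀ m (hm : m < p), cb m = v ⟨m, hm⟩ := by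
    intro m hm; simp only [hcb, dif_pos hm]
  have cb_high : ∀ m, p - 1 ≤ m → cb m = ↑(W.getVert (m - (p-1))) := by
    intro m hm
    by_cases h : m < p
    · have hm1 : m = p - 1 := by omega
      subst hm1
      rw [cb_low _ h]
      have : (p : ℕ) - 1 - (p - 1) = 0 := by omega
      rw [this, W.getVert_zero, ← hw']
    · simp only [hcb, dif_neg h]
  have cb_lev : ∀ m, p - 1 ≤ m → m ≤ p - 1 + j →
      ∃ y : ↥Y, cb m = ↑y ∧ (G.induce Y).dist w' y = m - (p-1) :=
    fun m h1 h2 => ⟨W.getVert (m - (p-1)), cb_high m h1, lev _ (by omega)⟩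
  have cb_notY : ∀ m, m + 1 < p → cb m ∉ Y := by
    intro m hm
    rw [cb_low m (by omega)]
    exact hout ⟨m, by omega⟩ hm
  -- adjacency characterization on the combined path
  have cb_adj : ∀ m m', m ≤ p-1+j → m' ≤ p-1+j →
      (G.Adj (cb m) (cb m') ↔ (m+1 = m' ∨ m'+1 = m)) := by
    have H : ∀ m m', m < m' → m' ≤ p-1+j → (G.Adj (cb m) (cb m') ↔ m+1 = m') := by
      intro m m' hlt hm'
      constructor
      · intro hAdj
        by_contra hne
        have hge : m + 2 ≤ m' := by omega
        by_cases hc1 : m' < p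
        · rw [cb_low m (by omega), cb_low m' hc1] at hAdj
          have := (hadjv _ _).1 hAdj
          simp only [] at this
          omega
        · obtain ⟨y', hy', hlev'⟩ := cb_lev m' (by omega) hm'
          by_cases hc2 : p - 1 ≤ m
          · obtain ⟨y, hy, hlevy⟩ := cb_lev m (by omega) (by omega)
            rw [hy, hy'] at hAdj
            have := my_adjlev conn w' y y' hAdj
            omega
          · rw [cb_low m (by omega), hy'] at hAdj
            by_cases hc3 : m + 2 < p
            · exact (hfar ⟨m, by omega⟩ hc3 ↑y' y'.2 hAdj)
            · have hm2 : m + 2 = p := by omega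
              have heq := hnear ⟨m, by omega⟩ hm2 ↑y' y'.2 hAdj ⟨p-1, by omega⟩ (by simp; omega)
              have hyw : y' = w' := Subtype.ext (by rw [heq, hw'])
              rw [hyw] at hlev'
              rw [SimpleGraph.dist_self] at hlev'
              omega
      · intro hcons
        by_cases hc1 : m' < p
        · rw [cb_low m (by omega), cb_low m' hc1]
          apply (hadjv _ _).2
          left; simp; omega
        · rw [cb_high m (by omega), cb_high m' (by omega)]
          have harr : m' - (p-1) = (m - (p-1)) + 1 := by omega
          rw [harr]
          have : (G.induce Y).Adj (W.getVert (m - (p-1))) (W.getVert (m - (p-1) + 1)) :=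
            W.adj_getVert_succ (by omega)
          exact this
    intro m m' hm hm'
    rcases lt_trichotomy m m' with h | h | h
    · rw [H m m' h hm']; constructor
      · intro hh; omega
      · intro hh; omega
    · subst h
      constructor
      · intro hA; exact absurd hA (G.loopless.irrefl _)
      · intro hh; omega
    · rw [G.adj_comm, H m' m h hm]; constructor
      · intro hh; omega
      · intro hh; omega
  have cb_inj : ∀ m m', m ≤ p-1+j → m' ≤ p-1+j → cb m = cb m' → m = m' := by
    intro m m' hm hm' heq
    by_cases h1 : m + 1 < p
    · by_cases h2 : m' + 1 < p
      · rw [cb_low m (by omega), cb_low m' (by omega)] at heq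
        exact congrArg Fin.val (hvinj heq)
      · obtain ⟨y', hy', -⟩ := cb_lev m' (by omega) hm'
        exact absurd (heq ▸ hy' ▸ y'.2) (cb_notY m h1)
    · by_cases h2 : m' + 1 < p
      · obtain ⟨y, hy, -⟩ := cb_lev m (by omega) hm
        exact absurd (heq ▸ hy ▸ y.2) (cb_notY m' h2)
      · obtain ⟨y, hy, hlevy⟩ := cb_lev m (by omega) hm
        obtain ⟨y', hy', hlevy'⟩ := cb_lev m' (by omega) hm'
        rw [hy, hy'] at heq
        have : y = y' := Subtype.ext heq
        rw [this] at hlevy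
        omega
  refine ⟨fun m => cb (j + m), ?_, ?_, ?_, ?_, ?_, ?_⟩
  · beta_reduce
    rw [cb_high (j + (p-1)) (by omega)]
    have : j + (p-1) - (p-1) = W.length := by omega
    rw [this, W.getVert_length]
  · intro m m' hm hm'
    beta_reduce
    rw [cb_adj (j+m) (j+m') (by omega) (by omega)]
    constructor
    · intro hh; omega
    · intro hh; omega
  · intro m hm m' hm' heq
    have := cb_inj (j+m) (j+m') (by omega) (by omega) heq
    omega
  · -- leaves at level ≥ j+1 vs positions m < p-1
    intro m hm y hylev
    beta_reduce
    have hyw : y ≠ w' := by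
      intro hyw; rw [hyw, SimpleGraph.dist_self] at hylev; omega
    set n := j + m with hn
    by_cases hc : n + 1 < p
    · constructor
      · rw [cb_low n (by omega)]
        by_cases hc3 : n + 2 < p
        · exact hfar ⟨n, by omega⟩ hc3 ↑y y.2
        · have hn2 : n + 2 = p := by omega
          intro hAdj
          have heq := hnear ⟨n, by omega⟩ hn2 ↑y y.2 hAdj ⟨p-1, by omega⟩ (by simp; omega)
          exact hyw (Subtype.ext (by rw [heq, hw']))
      · intro heq
        exact (cb_notY n hc) (by rw [heq]; exact y.2)
    · obtain ⟨z, hz, hlevz⟩ := cb_lev n (by omega) (by omega)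
      rw [hz]
      have hgap : (G.induce Y).dist w' z + 2 ≤ (G.induce Y).dist w' y := by omega
      constructor
      · intro hAdj
        have := my_adjlev conn w' z y hAdj
        omega
      · intro heq
        have : z = y := Subtype.ext heq
        rw [this] at hlevz; omega
  · -- leaves at level ≥ j vs positions m+1 < p-1
    intro hj1 m hm y hylev
    beta_reduce
    have hyw : y ≠ w' := by
      intro hyw; rw [hyw, SimpleGraph.dist_self] at hylev; omega
    set n := j + m with hn
    by_cases hc : n + 1 < p
    · constructor
      · rw [cb_low n (by omega)]
        by_cases hc3 : n + 2 < p
        · exact hfar ⟨n, by omega⟩ hc3 ↑y y.2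
        · have hn2 : n + 2 = p := by omega
          intro hAdj
          have heq := hnear ⟨n, by omega⟩ hn2 ↑y y.2 hAdj ⟨p-1, by omega⟩ (by simp; omega)
          exact hyw (Subtype.ext (by rw [heq, hw']))
      · intro heq
        exact (cb_notY n hc) (by rw [heq]; exact y.2)
    · obtain ⟨z, hz, hlevz⟩ := cb_lev n (by omega) (by omega)
      rw [hz]
      have hgap : (G.induce Y).dist w' z + 2 ≤ (G.induce Y).dist w' y := by omega
      constructor
      · intro hAdj
        have := my_adjlev conn w' z y hAdj
        omega
      · intro heq
        have : z = y := Subtype.ext heq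
        rw [this] at hlevz; omega
  · intro hp2 hj1
    refine ⟨W.getVert (j - 1), ?_, ?_⟩
    · beta_reduce
      rw [cb_high (j + (p-2)) (by omega)]
      have : j + (p-2) - (p-1) = j - 1 := by omega
      rw [this]
    · rw [lev (j-1) (by omega)]; omega

lemma my_claimA {V : Type} (G : SimpleGraph V) (p r : ℕ) (v : Fin p → V) (Y : Set V)
    (hp : 1 ≤ p) (hfree : IsEmpty (broomGraph p r ↪g G))
    (hvinj : Function.Injective v)
    (hadjv : ∀ i j : Fin p, G.Adj (v i) (v j) ↔ (i.val + 1 = j.val ∨ j.val + 1 = i.val))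
    (hout : ∀ i : Fin p, i.val + 1 < p → v i ∉ Y)
    (hfar : ∀ i : Fin p, i.val + 2 < p → ∀ y ∈ Y, ¬ G.Adj (v i) y)
    (hnear : ∀ i : Fin p, i.val + 2 = p → ∀ y ∈ Y, G.Adj (v i) y →
      ∀ j : Fin p, j.val + 1 = p → y = v j)
    (conn : (G.induce Y).Connected)
    (w' : ↥Y) (hw' : (w' : V) = v ⟨p-1, by omega⟩)
    (u : ↥Y) (A : Finset V)
    (hAlev : ∀ a ∈ A, ∃ ya : ↥Y, a = ↑ya ∧
      (G.induce Y).dist w' ya = (G.induce Y).dist w' u + 1)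
    (hAadj : ∀ a ∈ A, G.Adj ↑u a)
    (hAind : ∀ a ∈ A, ∀ b ∈ A, a ≠ b → ¬ G.Adj a b) :
    A.card < r := by
  by_contra hcon
  push_neg at hcon
  obtain ⟨B, hBA, hBcard⟩ := Finset.exists_subset_card_eq hcon
  obtain ⟨c, hc1, hc2, hc3, hc4, hc5, hc6⟩ :=
    my_window G p v Y hp hvinj hadjv hout hfar hnear conn w' hw' u
  apply my_broom_embed G p r hp hfree c B hBcard hc2 hc3
  · intro a ha; rw [hc1]; exact hAadj a (hBA ha)
  · intro a ha b hb hab; exact hAind a (hBA ha) b (hBA hb) hab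
  · intro a ha m hm
    obtain ⟨ya, rfl, hya⟩ := hAlev a (hBA ha)
    exact hc4 m hm ya (by omega)

lemma my_claimB {V : Type} (G : SimpleGraph V) (p r : ℕ) (v : Fin p → V) (Y : Set V)
    (hp : 1 ≤ p) (hr : 1 ≤ r) (hfree : IsEmpty (broomGraph p r ↪g G))
    (hvinj : Function.Injective v)
    (hadjv : ∀ i j : Fin p, G.Adj (v i) (v j) ↔ (i.val + 1 = j.val ∨ j.val + 1 = i.val))
    (hout : ∀ i : Fin p, i.val + 1 < p → v i ∉ Y)
    (hfar : ∀ i : Fin p, i.val + 2 < p → ∀ y ∈ Y, ¬ G.Adj (v i) y)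
    (hnear : ∀ i : Fin p, i.val + 2 = p → ∀ y ∈ Y, G.Adj (v i) y →
      ∀ j : Fin p, j.val + 1 = p → y = v j)
    (conn : (G.induce Y).Connected)
    (w' : ↥Y) (hw' : (w' : V) = v ⟨p-1, by omega⟩)
    (u : ↥Y) (hj1 : 1 ≤ (G.induce Y).dist w' u) (A : Finset V)
    (hAlev : ∀ a ∈ A, ∃ ya : ↥Y, a = ↑ya ∧
      (G.induce Y).dist w' ya = (G.induce Y).dist w' u)
    (hAadj : ∀ a ∈ A, G.Adj ↑u a)
    (hAind : ∀ a ∈ A, ∀ b ∈ A, a ≠ b → ¬ G.Adj a b) :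
    A.card ≤ 2 * r - 2 := by
  classical
  obtain ⟨c, hc1, hc2, hc3, hc4, hc5, hc6⟩ :=
    my_window G p v Y hp hvinj hadjv hout hfar hnear conn w' hw' u
  by_cases hp2 : 2 ≤ p
  · obtain ⟨x, hx, hxlev⟩ := hc6 hp2 hj1
    set A1 := A.filter (fun a => G.Adj ↑x a) with hA1def
    set A2 := A.filter (fun a => ¬ G.Adj ↑x a) with hA2def
    have hA1 : A1.card < r := by
      apply my_claimA G p r v Y hp hfree hvinj hadjv hout hfar hnear conn w' hw' x A1
      · intro a ha
        obtain ⟨ya, rfl, hya⟩ := hAlev a (Finset.mem_of_mem_filter a ha)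
        exact ⟨ya, rfl, by omega⟩
      · intro a ha; exact (Finset.mem_filter.1 ha).2
      · intro a ha b hb hab
        exact hAind a (Finset.mem_of_mem_filter a ha) b (Finset.mem_of_mem_filter b hb) hab
    have hA2 : A2.card < r := by
      by_contra hcon
      push_neg at hcon
      obtain ⟨B, hBA, hBcard⟩ := Finset.exists_subset_card_eq hcon
      apply my_broom_embed G p r hp hfree c B hBcard hc2 hc3
      · intro a ha; rw [hc1]
        exact hAadj a (Finset.mem_of_mem_filter a (hBA ha))
      · intro a ha b hb hab
        exact hAind a (Finset.mem_of_mem_filter a (hBA ha))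
          b (Finset.mem_of_mem_filter b (hBA hb)) hab
      · intro a ha m hm
        by_cases hmm : m + 1 < p - 1
        · obtain ⟨ya, rfl, hya⟩ := hAlev a (Finset.mem_of_mem_filter a (hBA ha))
          exact hc5 hj1 m hmm ya (by omega)
        · have hmeq : m = p - 2 := by omega
          subst hmeq
          rw [hx]
          constructor
          · exact (Finset.mem_filter.1 (hBA ha)).2
          · obtain ⟨ya, rfl, hya⟩ := hAlev a (Finset.mem_of_mem_filter a (hBA ha))
            intro heq
            have : x = ya := Subtype.ext heq
            rw [this] at hxlev
            omega
    have hsplit : A1.card + A2.card = A.card := by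
      rw [hA1def, hA2def]
      exact Finset.card_filter_add_card_filter_not _
    omega
  · -- p = 1 : no path constraints at all
    have hA : A.card < r := by
      by_contra hcon
      push_neg at hcon
      obtain ⟨B, hBA, hBcard⟩ := Finset.exists_subset_card_eq hcon
      apply my_broom_embed G p r hp hfree c B hBcard hc2 hc3
      · intro a ha; rw [hc1]; exact hAadj a (hBA ha)
      · intro a ha b hb hab; exact hAind a (hBA ha) b (hBA hb) hab
      · intro a ha m hm
        omega
    omega

lemma my_color {V : Type} [Fintype V] (G : SimpleGraph V) (Z : Set V) (lev : ↥Z → ℕ) (Bq : ℕ)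
    (hBqpos : 0 < Bq)
    (hlevadj : ∀ a b : ↥Z, G.Adj ↑a ↑b → lev b ≤ lev a + 1)
    (hdeg : ∀ z : ↥Z, ∀ T : Finset ↥Z, (∀ y ∈ T, G.Adj ↑z ↑y ∧ lev z = lev y) → T.card < Bq) :
    (G.induce Z).chromaticNumber ≤ ((Bq * 2 : ℕ) : ℕ∞) := by
  classical
  obtain ⟨c, hc⟩ := my_greedy' (V := ↥Z) (fun a b => G.Adj ↑a ↑b ∧ lev a = lev b) Bq
      (fun a b h => ⟨h.1.symm, h.2.symm⟩) hBqpos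
      (fun z T hT => hdeg z T hT)
  have hcoloring : (G.induce Z).Coloring (Fin Bq × Fin 2) := by
    refine SimpleGraph.Coloring.mk (fun z => (c z, ⟨lev z % 2, by omega⟩)) ?_
    intro a b hab heq
    have hGadj : G.Adj ↑a ↑b := hab
    have hne : a ≠ b := fun h => G.loopless.irrefl _ (h ▸ hGadj)
    have h1 := hlevadj a b hGadj
    have h2 := hlevadj b a hGadj.symm
    have hfst : c a = c b := congrArg Prod.fst heq
    have hsnd : lev a % 2 = lev b % 2 := by
      have := congrArg (fun x : Fin Bq × Fin 2 => (x.2 : ℕ)) heq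
      simpa using this
    by_cases hL : lev a = lev b
    · exact hc a b ⟨hGadj, hL⟩ hne hfst
    · omega
  calc (G.induce Z).chromaticNumber
      ≤ ((Fintype.card (Fin Bq × Fin 2) : ℕ) : ℕ∞) := hcoloring.colorable.chromaticNumber_le
    _ = ((Bq * 2 : ℕ) : ℕ∞) := by
        norm_num [Fintype.card_prod]


theorem stmt10 {V : Type} [Fintype V] (G : SimpleGraph V) (p r d t : ℕ)
    (hp : 1 ≤ p) (hr : 1 ≤ r) (hd : 1 ≤ d) (ht : 1 ≤ t)
    (hfree : IsEmpty (broomGraph p r ↪g G)) (homega : G.cliqueNum < d * t) :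
    ∀ (v : Fin p → V) (Y : Set V), IsBalloon G p t v Y →
      BalloonValue G p v Y < (((d * t) ^ (2 * r) : ℕ) : ℕ∞) := by
  classical
  intro v Y hball
  obtain ⟨hvinj, hadjv, hout, hin, hfar, hnear, hYcard, hYconn⟩ := hball
  have hploc : p - 1 < p := by omega
  have hwin : v ⟨p-1, hploc⟩ ∈ Y := hin ⟨p-1, hploc⟩ (by show p - 1 + 1 = p; omega)
  obtain ⟨w', hw'val⟩ : ∃ w' : ↥Y, (w' : V) = v ⟨p-1, hploc⟩ := ⟨⟨_, hwin⟩, rfl⟩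
  have conn : (G.induce Y).Connected := by
    have := hYconn ∅ (by simp) (by rw [Finset.card_empty]; omega)
    have h2 : Y \ ↑(∅ : Finset V) = Y := by simp
    rw [h2] at this
    exact this
  have hq2 : 2 ≤ d * t := by
    have h1 : ({v ⟨p-1, hploc⟩} : Finset V).card ≤ G.cliqueNum :=
      SimpleGraph.IsClique.card_le_cliqueNum (tc := by
        simp only [Finset.coe_singleton]
        exact SimpleGraph.isClique_singleton _)
    simp only [Finset.card_singleton] at h1
    omega
  set Z := BalloonZ G p v Y with hZdef
  have hZY : Z ⊆ Y := by
    rw [hZdef]; exact fun z hz => hz.1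
  have hZw : ∀ z ∈ Z, ¬ G.Adj (↑w') z := by
    intro z hz
    rw [hZdef] at hz
    rw [hw'val]
    exact hz.2 ⟨p-1, hploc⟩ (by show p - 1 + 1 = p; omega)
  have lev2 : ∀ z : ↥Y, ↑z ∈ Z → z ≠ w' → 2 ≤ (G.induce Y).dist w' z := by
    intro z hz hzw
    by_contra hcon
    push_neg at hcon
    obtain ⟨W, hW⟩ := conn.exists_walk_length_eq_dist w' z
    have hd01 : (G.induce Y).dist w' z = 0 ∨ (G.induce Y).dist w' z = 1 := by omega
    rcases hd01 with h0 | h1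
    · rw [h0] at hW
      exact hzw (SimpleGraph.Walk.eq_of_length_eq_zero hW).symm
    · have hadj : (G.induce Y).Adj w' z := SimpleGraph.dist_eq_one_iff_adj.1 h1
      exact hZw ↑z hz hadj
  set a0 := 2*r - 2 with ha0
  set b0 := d * t - 2 with hb0
  set Bq := (a0 + b0).choose a0 with hBq
  have hBqpos : 0 < Bq := Nat.choose_pos (by omega)
  -- level function on Z
  have hlevadj : ∀ a b : ↥Z, G.Adj ↑a ↑b →
      (G.induce Y).dist w' ⟨↑b, hZY b.2⟩ ≤ (G.induce Y).dist w' ⟨↑a, hZY a.2⟩ + 1 :=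
    fun a b h => my_adjlev conn w' _ _ h
  have hdeg : ∀ z : ↥Z, ∀ T : Finset ↥Z,
      (∀ y ∈ T, G.Adj ↑z ↑y ∧
        (G.induce Y).dist w' ⟨↑z, hZY z.2⟩ = (G.induce Y).dist w' ⟨↑y, hZY y.2⟩) →
      T.card < Bq := by
    intro z T hT
    by_cases hzw : (↑z : V) = (↑w' : V)
    · have hTe : T = ∅ := by
        rcases Finset.eq_empty_or_nonempty T with h | ⟨y, hy⟩
        · exact h
        · exfalso
          have h1 := (hT y hy).1
          rw [hzw] at h1
          exact hZw ↑y y.2 h1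
      rw [hTe]
      simpa using hBqpos
    · have hDcard : (T.image (Subtype.val : ↥Z → V)).card = T.card :=
        Finset.card_image_of_injective _ Subtype.val_injective
      have hzlev : 2 ≤ (G.induce Y).dist w' ⟨↑z, hZY z.2⟩ :=
        lev2 ⟨↑z, hZY z.2⟩ z.2 (fun h => hzw (congrArg Subtype.val h))
      have hDlt : (T.image (Subtype.val : ↥Z → V)).card < Bq := by
        rw [hBq]
        refine my_ram G (a0+b0) a0 b0 _ le_rfl ?_ ?_
        · -- independent subsets
          intro S hS hSind
          have hle := my_claimB G p r v Y hp hr hfree hvinj hadjv hout hfar hnear conn w'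
            hw'val ⟨↑z, hZY z.2⟩ (by omega) S ?_ ?_ hSind
          · omega
          · intro a ha
            obtain ⟨x, hxT, hxa⟩ := Finset.mem_image.1 (hS ha)
            exact ⟨⟨↑x, hZY x.2⟩, hxa.symm, ((hT x hxT).2).symm⟩
          · intro a ha
            obtain ⟨x, hxT, hxa⟩ := Finset.mem_image.1 (hS ha)
            rw [← hxa]
            exact (hT x hxT).1
        · -- clique subsets
          intro S hS hScl
          have hznotS : (↑z : V) ∉ S := by
            intro hmem
            obtain ⟨x, hxT, hxa⟩ := Finset.mem_image.1 (hS hmem)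
            have h2 := (hT x hxT).1
            rw [hxa] at h2
            exact G.loopless.irrefl _ h2
          have hclins : G.IsClique (↑(insert (↑z : V) S) : Set V) := by
            rw [Finset.coe_insert]
            refine hScl.insert ?_
            intro b hb hne
            obtain ⟨x, hxT, hxa⟩ := Finset.mem_image.1 (hS hb)
            rw [← hxa]
            exact (hT x hxT).1
          have hcl := SimpleGraph.IsClique.card_le_cliqueNum (tc := hclins)
          rw [Finset.card_insert_of_notMem hznotS] at hcl
          omega
      omega
  have hval : (G.induce Z).chromaticNumber ≤ ((Bq * 2 : ℕ) : ℕ∞) :=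
    my_color G Z (fun z => (G.induce Y).dist w' ⟨↑z, hZY z.2⟩) Bq hBqpos hlevadj hdeg
  have harith : Bq * 2 < (d * t) ^ (2*r) := by
    have h1 : Bq ≤ (b0+1)^a0 := by rw [hBq]; exact my_choose_le b0 a0
    have h3 : (b0+1)^a0 ≤ (d*t)^a0 := Nat.pow_le_pow_left (by omega) _
    have h4 : (d*t)^(2*r) = (d*t)^a0 * (d*t)^2 := by
      rw [← pow_add]; congr 1; omega
    have h5 : 0 < (d*t)^a0 := pow_pos (by omega) a0
    have h6 : 4 ≤ (d*t)^2 := by nlinarith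
    calc Bq * 2 ≤ (d*t)^a0 * 2 := Nat.mul_le_mul_right _ (le_trans h1 h3)
      _ < (d*t)^a0 * 4 := by omega
      _ ≤ (d*t)^a0 * (d*t)^2 := Nat.mul_le_mul_left _ h6
      _ = (d*t)^(2*r) := h4.symm
  have hBV : BalloonValue G p v Y = (G.induce (BalloonZ G p v Y)).chromaticNumber := rfl
  rw [hBV, ← hZdef]
  exact lt_of_le_of_lt hval (by exact_mod_cast harith)
end

section
/- Let G be a graph, and suppose that for some point a ∈ Y ⊆ V(G) there is a stable set {b_1,…,b_{2r}} of 2r neighbours of a in Y, that G[Y] is connected, and that v_1-…-v_p is an induced path with v_p ∈ Y, no vertex of {v_1,…,v_{p−2}} having a neighbour in Y, and v_p the unique neighbour of v_{p−1} in Y. Then G contains an induced copy of the broom H(p', r) for some p' ≥ p, where H(p', r) is a p'-vertex path with r extra leaves at one end. -/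
open SimpleGraph

private lemma walk_split {α : Type*} {H : SimpleGraph α} {x z : α} (w : H.Walk x z) :
    ∀ (j : ℕ), j ≤ w.length →
    ∃ (w₁ : H.Walk x (w.getVert j)) (w₂ : H.Walk (w.getVert j) z),
      w₁.length = j ∧ w₂.length = w.length - j := by
  induction w with
  | nil =>
    intro j hj
    simp only [SimpleGraph.Walk.length_nil, Nat.le_zero] at hj
    subst hj
    exact ⟨SimpleGraph.Walk.nil, SimpleGraph.Walk.nil, rfl, rfl⟩
  | @cons u x' z' h w ih =>
    intro j hj
    cases j with
    | zero => exact ⟨SimpleGraph.Walk.nil, SimpleGraph.Walk.cons h w, rfl, rfl⟩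
    | succ j =>
      obtain ⟨w₁, w₂, hl1, hl2⟩ := ih j (by simpa using hj)
      refine ⟨(SimpleGraph.Walk.cons h w₁).copy rfl (SimpleGraph.Walk.getVert_cons_succ w h).symm,
        (w₂.copy (SimpleGraph.Walk.getVert_cons_succ w h).symm rfl), by simp [hl1], by simp [hl2]⟩

private lemma broom_adj_ll {p r : ℕ} (i j : Fin p) :
    (broomGraph p r).Adj (Sum.inl i) (Sum.inl j) ↔ ((i : ℕ) + 1 = j ∨ (j : ℕ) + 1 = i) := by
  simp only [broomGraph, SimpleGraph.fromRel_adj, pathGraph_adj]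
  constructor
  · rintro ⟨-, h⟩; omega
  · intro h
    exact ⟨fun e => by cases Sum.inl_injective e; omega, by omega⟩

private lemma broom_adj_lr {p r : ℕ} (i : Fin p) (k : Fin r) :
    (broomGraph p r).Adj (Sum.inl i) (Sum.inr k) ↔ (i : ℕ) = 0 := by
  simp [broomGraph, SimpleGraph.fromRel_adj]

private lemma broom_adj_rl {p r : ℕ} (i : Fin p) (k : Fin r) :
    (broomGraph p r).Adj (Sum.inr k) (Sum.inl i) ↔ (i : ℕ) = 0 := by
  simp [broomGraph, SimpleGraph.fromRel_adj]

private lemma broom_adj_rr {p r : ℕ} (k k' : Fin r) :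
    ¬ (broomGraph p r).Adj (Sum.inr k) (Sum.inr k') := by
  simp [broomGraph, SimpleGraph.fromRel_adj]

private lemma assemble {V : Type} (G : SimpleGraph V) (m r : ℕ) (hm : 1 ≤ m) (u : ℕ → V)
    (hupath : ∀ i j, i < m → j < m → (G.Adj (u i) (u j) ↔ (i + 1 = j ∨ j + 1 = i)))
    (huinj : ∀ i j, i < m → j < m → u i = u j → i = j)
    (ℓ : Fin r → V) (hℓinj : Function.Injective ℓ)
    (hcentre : ∀ k, G.Adj (ℓ k) (u (m - 1)))
    (hside : ∀ k i, i + 1 < m → ¬ G.Adj (ℓ k) (u i))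
    (hneq : ∀ k i, i < m → ℓ k ≠ u i)
    (hstab : ∀ k k', ¬ G.Adj (ℓ k) (ℓ k')) :
    Nonempty (broomGraph m r ↪g G) := by
  refine ⟨⟨⟨Sum.elim (fun i => u (m - 1 - i.1)) ℓ, ?_⟩, ?_⟩⟩
  · rintro (i | k) (j | k') hij
    · simp only [Sum.elim_inl] at hij
      have := huinj _ _ (by omega) (by omega) hij
      have hi := i.2; have hj := j.2
      exact congrArg Sum.inl (Fin.ext (by omega))
    · exact absurd hij.symm (hneq k' _ (by omega))
    · exact absurd hij (hneq k _ (by omega))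
    · exact congrArg Sum.inr (hℓinj hij)
  · rintro (i | k) (j | k')
    · show G.Adj (u (m - 1 - i.1)) (u (m - 1 - j.1)) ↔ _
      rw [hupath _ _ (by omega) (by omega), broom_adj_ll]
      have hi := i.2; have hj := j.2
      omega
    · show G.Adj (u (m - 1 - i.1)) (ℓ k') ↔ _
      rw [broom_adj_lr]
      have hi := i.2
      constructor
      · intro hadj
        by_contra h0
        exact hside k' _ (by omega) ((G.adj_comm _ _).mp hadj)
      · intro h0
        have : m - 1 - (i : ℕ) = m - 1 := by omega
        rw [this]
        exact (hcentre k').symm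
    · show G.Adj (ℓ k) (u (m - 1 - j.1)) ↔ _
      rw [broom_adj_rl]
      have hj := j.2
      constructor
      · intro hadj
        by_contra h0
        exact hside k _ (by omega) hadj
      · intro h0
        have : m - 1 - (j : ℕ) = m - 1 := by omega
        rw [this]
        exact hcentre k
    · show G.Adj (ℓ k) (ℓ k') ↔ _
      exact iff_of_false (hstab k k') (broom_adj_rr k k')

private lemma extend_path {V : Type} (G : SimpleGraph V) (m : ℕ) (hm : 1 ≤ m) (u : ℕ → V)
    (wv : V)
    (hupath : ∀ i j, i < m → j < m → (G.Adj (u i) (u j) ↔ (i + 1 = j ∨ j + 1 = i)))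
    (huinj : ∀ i j, i < m → j < m → u i = u j → i = j)
    (hadj : G.Adj wv (u (m - 1)))
    (hnadj : ∀ i, i + 1 < m → ¬ G.Adj wv (u i))
    (hne : ∀ i, i < m → wv ≠ u i) :
    (∀ i j, i < m + 1 → j < m + 1 →
      (G.Adj (if i < m then u i else wv) (if j < m then u j else wv) ↔ (i + 1 = j ∨ j + 1 = i))) ∧
    (∀ i j, i < m + 1 → j < m + 1 →
      (if i < m then u i else wv) = (if j < m then u j else wv) → i = j) := by
  constructor
  · intro i j hi hj
    by_cases h1 : i < m
    · by_cases h2 : j < m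
      · rw [if_pos h1, if_pos h2]; exact hupath i j h1 h2
      · have hj' : j = m := by omega
        rw [if_pos h1, if_neg h2]
        constructor
        · intro hA
          by_cases hc : i + 1 = m
          · omega
          · exact absurd hA.symm (hnadj i (by omega))
        · intro hc
          have hi' : i = m - 1 := by omega
          rw [hi']
          exact hadj.symm
    · have hi' : i = m := by omega
      by_cases h2 : j < m
      · rw [if_neg h1, if_pos h2]
        constructor
        · intro hA
          by_cases hc : j + 1 = m
          · omega
          · exact absurd hA (hnadj j (by omega))
        · intro hc
          have hj' : j = m - 1 := by omega
          rw [hj']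
          exact hadj
      · rw [if_neg h1, if_neg h2]
        exact iff_of_false (G.irrefl) (by omega)
  · intro i j hi hj he
    by_cases h1 : i < m <;> by_cases h2 : j < m
    · rw [if_pos h1, if_pos h2] at he; exact huinj i j h1 h2 he
    · rw [if_pos h1, if_neg h2] at he; exact absurd he.symm (hne i h1)
    · rw [if_neg h1, if_pos h2] at he; exact absurd he (hne j h2)
    · omega

private lemma pick_subset {n r : ℕ} (s : Finset (Fin n)) (h : r ≤ s.card) :
    ∃ g : Fin r → Fin n, Function.Injective g ∧ ∀ k, g k ∈ s := by
  obtain ⟨t, hts, htc⟩ := Finset.exists_subset_card_eq h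
  refine ⟨fun k => (t.orderIsoOfFin htc k : Fin n), ?_, fun k => hts (t.orderIsoOfFin htc k).2⟩
  intro k k' e
  exact (t.orderIsoOfFin htc).injective (Subtype.ext e)

theorem stmt12 {V : Type} [Fintype V] (G : SimpleGraph V) (p r : ℕ) (hp : 1 ≤ p)
    (Y : Set V) (a : V) (ha : a ∈ Y)
    (b : Fin (2 * r) → V) (hbY : ∀ i, b i ∈ Y) (hbinj : Function.Injective b)
    (hba : ∀ i, G.Adj a (b i)) (hstable : ∀ i j, ¬ G.Adj (b i) (b j))
    (hconn : (G.induce Y).Connected)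
    (v : Fin p → V) (hvinj : Function.Injective v)
    (hpath : ∀ i j : Fin p, G.Adj (v i) (v j) ↔ (i.val + 1 = j.val ∨ j.val + 1 = i.val))
    (h1 : ∀ i : Fin p, i.val + 1 < p → v i ∉ Y)
    (h2 : ∀ i : Fin p, i.val + 1 = p → v i ∈ Y)
    (h3 : ∀ i : Fin p, i.val + 2 < p → ∀ y ∈ Y, ¬ G.Adj (v i) y)
    (h4 : ∀ i : Fin p, i.val + 2 = p → ∀ y ∈ Y, G.Adj (v i) y →
      ∀ j : Fin p, j.val + 1 = p → y = v j) :
    ∃ p', p ≤ p' ∧ Nonempty (broomGraph p' r ↪g G) := by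
  classical
  have hp1 : p - 1 < p := by omega
  have hxY : v ⟨p - 1, hp1⟩ ∈ Y := h2 ⟨p - 1, hp1⟩ (show p - 1 + 1 = p by omega)
  obtain ⟨q, ⟨z, hzS, w, hwlen⟩, hqmin⟩ :
      ∃ q₀ : ℕ, (∃ zz : Y, (zz : V) ∈ insert a (Set.range b) ∧
          ∃ w' : (G.induce Y).Walk ⟨v ⟨p - 1, hp1⟩, hxY⟩ zz, w'.length = q₀) ∧
        ∀ n : ℕ, (∃ zz : Y, (zz : V) ∈ insert a (Set.range b) ∧
          ∃ w' : (G.induce Y).Walk ⟨v ⟨p - 1, hp1⟩, hxY⟩ zz, w'.length = n) → q₀ ≤ n := by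
    have hPex : ∃ n : ℕ, ∃ zz : Y, (zz : V) ∈ insert a (Set.range b) ∧
        ∃ w' : (G.induce Y).Walk ⟨v ⟨p - 1, hp1⟩, hxY⟩ zz, w'.length = n := by
      obtain ⟨w0⟩ := hconn.preconnected ⟨v ⟨p - 1, hp1⟩, hxY⟩ ⟨a, ha⟩
      exact ⟨w0.length, ⟨a, ha⟩, Set.mem_insert _ _, w0, rfl⟩
    exact ⟨_, Nat.sInf_mem hPex, fun n hn => Nat.sInf_le hn⟩
  have hind : ∀ u₁ u₂ : Y, (G.induce Y).Adj u₁ u₂ ↔ G.Adj ↑u₁ ↑u₂ := fun _ _ => Iff.rfl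
  have hS'Y : ∀ c ∈ insert a (Set.range b), c ∈ Y := by
    intro c hc
    rw [Set.mem_insert_iff] at hc
    rcases hc with rfl | ⟨k, rfl⟩
    · exact ha
    · exact hbY k
  have hy0 : (↑(w.getVert 0) : V) = v ⟨p - 1, hp1⟩ := by rw [SimpleGraph.Walk.getVert_zero]
  have hyq : (↑(w.getVert q) : V) = ↑z := by rw [← hwlen, SimpleGraph.Walk.getVert_length]
  -- no "long" adjacency along the walk
  have hfar : ∀ s t, s + 1 < t → t ≤ q → ¬ G.Adj ↑(w.getVert s) ↑(w.getVert t) := by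
    intro s t hst ht hA
    obtain ⟨w1, -, hl1, -⟩ := walk_split w s (by omega)
    obtain ⟨-, w2, -, hl2⟩ := walk_split w t (by omega)
    have hedge : (G.induce Y).Adj (w.getVert s) (w.getVert t) := (hind _ _).mpr hA
    have hq := hqmin (w1.append (SimpleGraph.Walk.cons hedge w2)).length ⟨z, hzS, _, rfl⟩
    rw [SimpleGraph.Walk.length_append, SimpleGraph.Walk.length_cons, hl1, hl2] at hq
    omega
  -- injectivity along the walk
  have hlt : ∀ s t, s < t → t ≤ q → (↑(w.getVert s) : V) = ↑(w.getVert t) → False := by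
    intro s t hst ht he
    obtain ⟨w1, -, hl1, -⟩ := walk_split w s (by omega)
    obtain ⟨-, w2, -, hl2⟩ := walk_split w t (by omega)
    have hgv : w.getVert t = w.getVert s := Subtype.ext he.symm
    have hq := hqmin (w1.append (w2.copy hgv rfl)).length ⟨z, hzS, _, rfl⟩
    rw [SimpleGraph.Walk.length_append, SimpleGraph.Walk.length_copy, hl1, hl2] at hq
    omega
  have hyinj : ∀ s t, s ≤ q → t ≤ q → (↑(w.getVert s) : V) = ↑(w.getVert t) → s = t := by
    intro s t hs ht he
    rcases Nat.lt_trichotomy s t with h | h | h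
    · exact (hlt s t h ht he).elim
    · exact h
    · exact (hlt t s h hs he.symm).elim
  have hyadj : ∀ s t, s ≤ q → t ≤ q →
      (G.Adj ↑(w.getVert s) ↑(w.getVert t) ↔ (s + 1 = t ∨ t + 1 = s)) := by
    intro s t hs ht
    constructor
    · intro hA
      by_contra hno
      push_neg at hno
      rcases Nat.lt_trichotomy s t with h | h | h
      · exact hfar s t (by omega) ht hA
      · exact hA.ne (by rw [h])
      · exact hfar t s (by omega) hs hA.symm
    · rintro (h | h)
      · subst h
        exact (hind _ _).mp (w.adj_getVert_succ (by omega))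
      · subst h
        exact ((hind _ _).mp (w.adj_getVert_succ (by omega))).symm
  have hS : ∀ t, t < q → (↑(w.getVert t) : V) ∉ insert a (Set.range b) := by
    intro t ht hmem
    obtain ⟨w1, -, hl1, -⟩ := walk_split w t (by omega)
    have hq := hqmin w1.length ⟨w.getVert t, hmem, w1, rfl⟩
    omega
  have hSadj : ∀ t, t + 1 < q → ∀ c ∈ insert a (Set.range b), ¬ G.Adj ↑(w.getVert t) c := by
    intro t ht c hc hA
    have hcY := hS'Y c hc
    obtain ⟨w1, -, hl1, -⟩ := walk_split w t (by omega)
    have hedge : (G.induce Y).Adj (w.getVert t) ⟨c, hcY⟩ := (hind _ _).mpr hA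
    have hq := hqmin (w1.append (SimpleGraph.Walk.cons hedge SimpleGraph.Walk.nil)).length
      ⟨⟨c, hcY⟩, hc, _, rfl⟩
    rw [SimpleGraph.Walk.length_append, SimpleGraph.Walk.length_cons,
      SimpleGraph.Walk.length_nil, hl1] at hq
    omega
  -- the concatenated path
  obtain ⟨U, hUdef⟩ : ∃ U : ℕ → V,
      ∀ i, U i = if h : i < p then v ⟨i, h⟩ else (↑(w.getVert (i + 1 - p)) : V) :=
    ⟨_, fun _ => rfl⟩
  have hUmain : ∀ i j, i ≤ j → j < p + q → (G.Adj (U i) (U j) ↔ (i + 1 = j ∨ j + 1 = i)) := by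
    intro i j hij hj
    by_cases hip : i < p
    · by_cases hjp : j < p
      · rw [hUdef i, hUdef j, dif_pos hip, dif_pos hjp]
        exact hpath ⟨i, hip⟩ ⟨j, hjp⟩
      · rw [hUdef i, hUdef j, dif_pos hip, dif_neg hjp]
        by_cases hlast : i = p - 1
        · subst hlast
          have base := hyadj 0 (j + 1 - p) (by omega) (by omega)
          rw [hy0] at base
          exact base.trans (by omega)
        · refine iff_of_false ?_ (by omega)
          by_cases hi3 : i + 2 < p
          · exact h3 ⟨i, hip⟩ (show i + 2 < p from hi3) _ ((w.getVert (j + 1 - p)).2)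
          · intro hA
            have heq := h4 ⟨i, hip⟩ (show i + 2 = p by omega) _ ((w.getVert (j + 1 - p)).2) hA
              ⟨p - 1, hp1⟩ (show p - 1 + 1 = p by omega)
            have := hyinj (j + 1 - p) 0 (by omega) (by omega) (heq.trans hy0.symm)
            omega
    · have hjp : ¬ j < p := by omega
      rw [hUdef i, hUdef j, dif_neg hip, dif_neg hjp]
      rw [hyadj (i + 1 - p) (j + 1 - p) (by omega) (by omega)]
      omega
  have hUpath : ∀ i j, i < p + q → j < p + q → (G.Adj (U i) (U j) ↔ (i + 1 = j ∨ j + 1 = i)) := by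
    intro i j hi hj
    rcases le_total i j with h | h
    · exact hUmain i j h hj
    · rw [G.adj_comm, hUmain j i h hi]
      exact or_comm
  have hUinjm : ∀ i j, i ≤ j → j < p + q → U i = U j → i = j := by
    intro i j hij hj he
    by_cases hip : i < p
    · by_cases hjp : j < p
      · rw [hUdef i, hUdef j, dif_pos hip, dif_pos hjp] at he
        exact congrArg Fin.val (hvinj he)
      · rw [hUdef i, hUdef j, dif_pos hip, dif_neg hjp] at he
        by_cases hlast : i = p - 1
        · subst hlast
          have h0 : (↑(w.getVert 0) : V) = v ⟨p - 1, hip⟩ := hy0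
          have := hyinj 0 (j + 1 - p) (by omega) (by omega) (h0.trans he)
          omega
        · exact absurd (by rw [he]; exact (w.getVert (j + 1 - p)).2)
            (h1 ⟨i, hip⟩ (show i + 1 < p by omega))
    · have hjp : ¬ j < p := by omega
      rw [hUdef i, hUdef j, dif_neg hip, dif_neg hjp] at he
      have := hyinj _ _ (by omega) (by omega) he
      omega
  have hUinj : ∀ i j, i < p + q → j < p + q → U i = U j → i = j := by
    intro i j hi hj he
    rcases le_total i j with h | h
    · exact hUinjm i j h hj he
    · exact (hUinjm j i h hi he.symm).symm
  have hUmid : ∀ i, p - 1 ≤ i → U i = ↑(w.getVert (i + 1 - p)) := by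
    intro i hi
    by_cases hip : i < p
    · have h0 : i + 1 - p = 0 := by omega
      rw [hUdef i, dif_pos hip, h0]
      exact (congrArg v (Fin.ext (show i = p - 1 by omega))).trans hy0.symm
    · rw [hUdef i, dif_neg hip]
  rcases Nat.eq_zero_or_pos r with hr0 | hr
  · subst hr0
    exact ⟨p, le_rfl, assemble G p 0 hp U
      (fun i j hi hj => hUpath i j (by omega) (by omega))
      (fun i j hi hj => hUinj i j (by omega) (by omega))
      Fin.elim0 (Function.injective_of_subsingleton _)
      (fun k => k.elim0) (fun k => k.elim0) (fun k => k.elim0) (fun k => k.elim0)⟩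
  rcases Nat.eq_zero_or_pos q with hq0 | hq1
  · -- q = 0 : the last path vertex is already in the star set
    subst hq0
    have hv_z : v ⟨p - 1, hp1⟩ = ↑z := hy0.symm.trans hyq
    rw [Set.mem_insert_iff] at hzS
    rcases hzS with hza | ⟨k0, hzb⟩
    · -- v (p-1) = a
      have hva : v ⟨p - 1, hp1⟩ = a := hv_z.trans hza
      obtain ⟨g, hginj, -⟩ := pick_subset (r := r) (Finset.univ : Finset (Fin (2 * r)))
        (by rw [Finset.card_univ, Fintype.card_fin]; omega)
      refine ⟨p, le_rfl, assemble G p r hp U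
        (fun i j hi hj => hUpath i j (by omega) (by omega))
        (fun i j hi hj => hUinj i j (by omega) (by omega))
        (fun k => b (g k)) (hbinj.comp hginj) ?_ ?_ ?_ (fun k k' => hstable _ _)⟩
      · intro k
        rw [hUdef (p - 1), dif_pos hp1, hva]
        exact (hba _).symm
      · intro k i hi
        have hip : i < p := by omega
        rw [hUdef i, dif_pos hip]
        by_cases hi3 : i + 2 < p
        · exact fun hA => h3 ⟨i, hip⟩ (show i + 2 < p from hi3) _ (hbY _) hA.symm
        · intro hA
          have heq := h4 ⟨i, hip⟩ (show i + 2 = p by omega) _ (hbY _) hA.symm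
            ⟨p - 1, hp1⟩ (show p - 1 + 1 = p by omega)
          exact (hba (g k)).ne' (heq.trans hva)
      · intro k i hi
        rw [hUdef i, dif_pos hi]
        by_cases hi1 : i + 1 < p
        · exact fun e => h1 ⟨i, hi⟩ (show i + 1 < p from hi1) (e ▸ hbY (g k))
        · intro e
          have hfin : (⟨i, hi⟩ : Fin p) = ⟨p - 1, hp1⟩ := Fin.ext (show i = p - 1 by omega)
          rw [hfin, hva] at e
          exact (hba (g k)).ne' e
    · -- v (p-1) = b k0 : extend by a
      have hvb : v ⟨p - 1, hp1⟩ = b k0 := hv_z.trans hzb.symm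
      have hext := extend_path G p hp U a
        (fun i j hi hj => hUpath i j (by omega) (by omega))
        (fun i j hi hj => hUinj i j (by omega) (by omega))
        (by rw [hUdef (p - 1), dif_pos hp1, hvb]; exact hba k0)
        (by
          intro i hi
          have hip : i < p := by omega
          rw [hUdef i, dif_pos hip]
          by_cases hi3 : i + 2 < p
          · exact fun hA => h3 ⟨i, hip⟩ (show i + 2 < p from hi3) a ha hA.symm
          · intro hA
            have heq := h4 ⟨i, hip⟩ (show i + 2 = p by omega) a ha hA.symm
              ⟨p - 1, hp1⟩ (show p - 1 + 1 = p by omega)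
            exact (hba k0).ne (heq.trans hvb))
        (by
          intro i hi
          rw [hUdef i, dif_pos hi]
          by_cases hi1 : i + 1 < p
          · exact fun e => h1 ⟨i, hi⟩ (show i + 1 < p from hi1) (e ▸ ha)
          · intro e
            have hfin : (⟨i, hi⟩ : Fin p) = ⟨p - 1, hp1⟩ := Fin.ext (show i = p - 1 by omega)
            rw [hfin, hvb] at e
            exact (hba k0).ne e)
      obtain ⟨g, hginj, hgmem⟩ := pick_subset (r := r) ((Finset.univ : Finset (Fin (2 * r))).erase k0)
        (by rw [Finset.card_erase_of_mem (Finset.mem_univ _), Finset.card_univ,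
            Fintype.card_fin]; omega)
      have hgne : ∀ k, g k ≠ k0 := fun k => (Finset.mem_erase.mp (hgmem k)).1
      refine ⟨p + 1, by omega, assemble G (p + 1) r (by omega)
        (fun n => if n < p then U n else a) hext.1 hext.2
        (fun k => b (g k)) (hbinj.comp hginj) ?_ ?_ ?_ (fun k k' => hstable _ _)⟩
      · intro k
        show G.Adj (b (g k)) (if p + 1 - 1 < p then U (p + 1 - 1) else a)
        rw [if_neg (by omega)]
        exact (hba _).symm
      · intro k i hi
        have hip : i < p := by omega
        show ¬ G.Adj (b (g k)) (if i < p then U i else a)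
        rw [if_pos hip, hUdef i, dif_pos hip]
        by_cases hi3 : i + 2 < p
        · exact fun hA => h3 ⟨i, hip⟩ (show i + 2 < p from hi3) _ (hbY _) hA.symm
        · by_cases hi1 : i + 1 < p
          · intro hA
            have heq := h4 ⟨i, hip⟩ (show i + 2 = p by omega) _ (hbY _) hA.symm
              ⟨p - 1, hp1⟩ (show p - 1 + 1 = p by omega)
            rw [hvb] at heq
            exact hgne k (hbinj heq)
          · intro hA
            have hfin : (⟨i, hip⟩ : Fin p) = ⟨p - 1, hp1⟩ := Fin.ext (show i = p - 1 by omega)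
            rw [hfin, hvb] at hA
            exact hstable (g k) k0 hA
      · intro k i hi
        show b (g k) ≠ (if i < p then U i else a)
        by_cases hip : i < p
        · rw [if_pos hip, hUdef i, dif_pos hip]
          by_cases hi1 : i + 1 < p
          · exact fun e => h1 ⟨i, hip⟩ (show i + 1 < p from hi1) (e ▸ hbY (g k))
          · intro e
            have hfin : (⟨i, hip⟩ : Fin p) = ⟨p - 1, hp1⟩ := Fin.ext (show i = p - 1 by omega)
            rw [hfin, hvb] at e
            exact hgne k (hbinj e)
        · rw [if_neg hip]
          exact (hba _).ne'
  · -- q ≥ 1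
    have hbS : ∀ k, b k ∈ insert a (Set.range b) :=
      fun k => Set.mem_insert_of_mem _ ⟨k, rfl⟩
    have haS : a ∈ insert a (Set.range b) := Set.mem_insert _ _
    have hnadjv : ∀ c ∈ insert a (Set.range b), ∀ i (hip : i < p), i + 1 < p →
        ¬ G.Adj c (v ⟨i, hip⟩) := by
      intro c hc i hip hi1
      by_cases hi3 : i + 2 < p
      · exact fun hA => h3 ⟨i, hip⟩ (show i + 2 < p from hi3) c (hS'Y c hc) hA.symm
      · intro hA
        have heq := h4 ⟨i, hip⟩ (show i + 2 = p by omega) c (hS'Y c hc) hA.symm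
          ⟨p - 1, hp1⟩ (show p - 1 + 1 = p by omega)
        have hc0 : c = ↑(w.getVert 0) := heq.trans hy0.symm
        exact hS 0 (by omega) (hc0 ▸ hc)
    have hneqv : ∀ c ∈ insert a (Set.range b), ∀ i (hip : i < p), c ≠ v ⟨i, hip⟩ := by
      intro c hc i hip e
      by_cases hi1 : i + 1 < p
      · exact h1 ⟨i, hip⟩ (show i + 1 < p from hi1) (e ▸ hS'Y c hc)
      · have hfin : (⟨i, hip⟩ : Fin p) = ⟨p - 1, hp1⟩ := Fin.ext (show i = p - 1 by omega)
        rw [hfin] at e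
        exact hS 0 (by omega) ((e.trans hy0.symm) ▸ hc)
    have hne_all : ∀ c ∈ insert a (Set.range b), ∀ i, i < p + q - 1 → c ≠ U i := by
      intro c hc i hi
      by_cases hip : i < p
      · rw [hUdef i, dif_pos hip]
        exact hneqv c hc i hip
      · rw [hUdef i, dif_neg hip]
        intro e
        exact hS (i + 1 - p) (by omega) (e ▸ hc)
    have hnadj_all : ∀ c ∈ insert a (Set.range b), ∀ i, i + 1 < p + q - 1 →
        ¬ G.Adj c (U i) := by
      intro c hc i hi
      by_cases hi1 : i + 1 < p
      · rw [hUdef i, dif_pos (show i < p by omega)]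
        exact hnadjv c hc i _ hi1
      · rw [hUmid i (by omega)]
        exact fun hA => hSadj (i + 1 - p) (by omega) c hc hA.symm
    rcases le_or_gt r (Finset.univ.filter
        fun i => G.Adj (b i) ((w.getVert (q - 1) : V))).card with hBr | hBr
    · -- many leaves attached at y (q-1): centre y (q-1)
      obtain ⟨g, hginj, hgmem⟩ := pick_subset _ hBr
      have hgadj : ∀ k, G.Adj (b (g k)) ↑(w.getVert (q - 1)) :=
        fun k => (Finset.mem_filter.mp (hgmem k)).2
      refine ⟨p + q - 1, by omega, assemble G (p + q - 1) r (by omega) U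
        (fun i j hi hj => hUpath i j (by omega) (by omega))
        (fun i j hi hj => hUinj i j (by omega) (by omega))
        (fun k => b (g k)) (hbinj.comp hginj) ?_ ?_ ?_ (fun k k' => hstable _ _)⟩
      · intro k
        have hU1 : U (p + q - 1 - 1) = ↑(w.getVert (q - 1)) := by
          rw [hUmid _ (by omega)]
          have he : p + q - 1 - 1 + 1 - p = q - 1 := by omega
          rw [he]
        rw [hU1]
        exact hgadj k
      · intro k i hi
        exact hnadj_all _ (hbS (g k)) i (by omega)
      · intro k i hi
        exact hne_all _ (hbS (g k)) i (by omega)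
    · -- many leaves not attached at y (q-1): centre a
      have hBc : r ≤ (Finset.univ.filter
          fun i => ¬ G.Adj (b i) ((w.getVert (q - 1) : V))).card := by
        have hcc := Finset.card_filter_add_card_filter_not
          (s := (Finset.univ : Finset (Fin (2 * r))))
          (p := fun i => G.Adj (b i) ((w.getVert (q - 1) : V)))
        rw [Finset.card_univ, Fintype.card_fin] at hcc
        omega
      obtain ⟨g, hginj, hgmem⟩ := pick_subset _ hBc
      have hgnadj : ∀ k, ¬ G.Adj (b (g k)) ↑(w.getVert (q - 1)) :=
        fun k => (Finset.mem_filter.mp (hgmem k)).2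
      rw [Set.mem_insert_iff] at hzS
      rcases hzS with hza | ⟨k0, hzb⟩
      · -- the walk ends at a
        have hUq : U (p + q - 1) = a := by
          rw [hUmid _ (by omega)]
          have he : p + q - 1 + 1 - p = q := by omega
          rw [he, hyq, hza]
        refine ⟨p + q, by omega, assemble G (p + q) r (by omega) U hUpath hUinj
          (fun k => b (g k)) (hbinj.comp hginj) ?_ ?_ ?_ (fun k k' => hstable _ _)⟩
        · intro k
          rw [hUq]
          exact (hba _).symm
        · intro k i hi
          by_cases hi2 : i + 1 < p + q - 1
          · exact hnadj_all _ (hbS (g k)) i hi2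
          · have hUi : U i = ↑(w.getVert (q - 1)) := by
              rw [hUmid _ (by omega)]
              have he : i + 1 - p = q - 1 := by omega
              rw [he]
            rw [hUi]
            exact hgnadj k
        · intro k i hi
          by_cases hi2 : i < p + q - 1
          · exact hne_all _ (hbS (g k)) i hi2
          · have he : i = p + q - 1 := by omega
            rw [he, hUq]
            exact (hba _).ne'
      · -- the walk ends at b k0
        have hUq : U (p + q - 1) = b k0 := by
          rw [hUmid _ (by omega)]
          have he : p + q - 1 + 1 - p = q := by omega
          rw [he, hyq, ← hzb]
        have hk0 : G.Adj (b k0) ↑(w.getVert (q - 1)) := by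
          have hA := (hyadj (q - 1) q (by omega) (by omega)).mpr (by omega)
          rw [hyq, ← hzb] at hA
          exact hA.symm
        by_cases hadjA : G.Adj a ↑(w.getVert (q - 1))
        · -- a attached to y (q-1): path v … y (q-1) a
          have hUm : U (p + q - 1 - 1) = ↑(w.getVert (q - 1)) := by
            rw [hUmid _ (by omega)]
            have he : p + q - 1 - 1 + 1 - p = q - 1 := by omega
            rw [he]
          have hext := extend_path G (p + q - 1) (by omega) U a
            (fun i j hi hj => hUpath i j (by omega) (by omega))
            (fun i j hi hj => hUinj i j (by omega) (by omega))
            (by rw [hUm]; exact hadjA)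
            (fun i hi => hnadj_all a haS i (by omega))
            (fun i hi => hne_all a haS i hi)
          refine ⟨p + q, by omega, assemble G (p + q) r (by omega)
            (fun n => if n < p + q - 1 then U n else a)
            (fun i j hi hj => hext.1 i j (by omega) (by omega))
            (fun i j hi hj => hext.2 i j (by omega) (by omega))
            (fun k => b (g k)) (hbinj.comp hginj) ?_ ?_ ?_ (fun k k' => hstable _ _)⟩
          · intro k
            show G.Adj (b (g k)) (if p + q - 1 < p + q - 1 then U (p + q - 1) else a)
            rw [if_neg (by omega)]
            exact (hba _).symm
          · intro k i hi
            show ¬ G.Adj (b (g k)) (if i < p + q - 1 then U i else a)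
            rw [if_pos (by omega)]
            by_cases hi2 : i + 1 < p + q - 1
            · exact hnadj_all _ (hbS (g k)) i hi2
            · have hUi : U i = ↑(w.getVert (q - 1)) := by
                rw [hUmid _ (by omega)]
                have he : i + 1 - p = q - 1 := by omega
                rw [he]
              rw [hUi]
              exact hgnadj k
          · intro k i hi
            show b (g k) ≠ (if i < p + q - 1 then U i else a)
            by_cases hip : i < p + q - 1
            · rw [if_pos hip]
              exact hne_all _ (hbS (g k)) i hip
            · rw [if_neg hip]
              exact (hba _).ne'
        · -- a not attached to y (q-1): path v … y (q-1) y q a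
          have hext := extend_path G (p + q) (by omega) U a hUpath hUinj
            (by
              have he : p + q - 1 = p + q - 1 := rfl
              rw [hUq]
              exact hba k0)
            (by
              intro i hi
              by_cases hi2 : i + 1 < p + q - 1
              · exact hnadj_all a haS i hi2
              · have hUi : U i = ↑(w.getVert (q - 1)) := by
                  rw [hUmid _ (by omega)]
                  have he : i + 1 - p = q - 1 := by omega
                  rw [he]
                rw [hUi]
                exact hadjA)
            (by
              intro i hi
              by_cases hi2 : i < p + q - 1
              · exact hne_all a haS i hi2
              · have he : i = p + q - 1 := by omega
                rw [he, hUq]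
                exact (hba k0).ne)
          refine ⟨p + q + 1, by omega, assemble G (p + q + 1) r (by omega)
            (fun n => if n < p + q then U n else a) hext.1 hext.2
            (fun k => b (g k)) (hbinj.comp hginj) ?_ ?_ ?_ (fun k k' => hstable _ _)⟩
          · intro k
            show G.Adj (b (g k)) (if p + q + 1 - 1 < p + q then U (p + q + 1 - 1) else a)
            rw [if_neg (by omega)]
            exact (hba _).symm
          · intro k i hi
            show ¬ G.Adj (b (g k)) (if i < p + q then U i else a)
            rw [if_pos (by omega)]
            by_cases hi2 : i + 1 < p + q - 1
            · exact hnadj_all _ (hbS (g k)) i hi2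
            · by_cases hi3 : i = p + q - 1
              · rw [hi3, hUq]
                exact hstable (g k) k0
              · have hUi : U i = ↑(w.getVert (q - 1)) := by
                  rw [hUmid _ (by omega)]
                  have he : i + 1 - p = q - 1 := by omega
                  rw [he]
                rw [hUi]
                exact hgnadj k
          · intro k i hi
            show b (g k) ≠ (if i < p + q then U i else a)
            by_cases hip : i < p + q
            · rw [if_pos hip]
              by_cases hi2 : i < p + q - 1
              · exact hne_all _ (hbS (g k)) i hi2
              · have he : i = p + q - 1 := by omega
                rw [he, hUq]
                intro e
                exact hgnadj k (by rw [hbinj e]; exact hk0)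
            · rw [if_neg hip]
              exact (hba _).ne'
end

section
/- Let H be the disjoint union of graphs H_1 and H_2, both of which are multibounding. Then H is multibounding. -/
open SimpleGraph

/-! ### Auxiliary machinery for `stmt14` -/

section Stmt14Aux

open SimpleGraph

variable {V : Type*} {G : SimpleGraph V}

lemma KK_adj' {d t : ℕ} (a b : (Σ _ : Fin d, Fin t)) : (KK d t).Adj a b ↔ a.1 ≠ b.1 := Iff.rfl

/-- inclusion embedding of an induced subgraph -/
def inclEmb (G : SimpleGraph V) (X : Set V) : (G.induce X) ↪g G :=
  ⟨⟨Subtype.val, Subtype.val_injective⟩, Iff.rfl⟩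

/-- monotone inclusion of induced subgraphs -/
def inclEmb2 (G : SimpleGraph V) {X Y : Set V} (h : X ⊆ Y) : (G.induce X) ↪g (G.induce Y) :=
  ⟨⟨Set.inclusion h, Set.inclusion_injective h⟩, Iff.rfl⟩

lemma colorable_induce_mono {X Y : Set V} (h : X ⊆ Y) {m : ℕ}
    (hc : (G.induce Y).Colorable m) : (G.induce X).Colorable m :=
  Colorable.of_hom (inclEmb2 G h).toHom hc

lemma containsSub_of_induce {A : Type*} {K : SimpleGraph A} {X : Set V}
    (h : ContainsSub K (G.induce X)) : ContainsSub K G := by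
  obtain ⟨f, hf⟩ := h
  exact ⟨(inclEmb G X).toHom.comp f, Subtype.val_injective.comp hf⟩

lemma isEmpty_emb_induce {A : Type*} {K : SimpleGraph A} {X : Set V}
    (h : IsEmpty (K ↪g G)) : IsEmpty (K ↪g G.induce X) :=
  ⟨fun e => h.elim ((inclEmb G X).comp e)⟩

lemma containsSub_KK_zero (t : ℕ) (G : SimpleGraph V) : ContainsSub (KK 0 t) G :=
  ⟨⟨fun x => isEmptyElim x.1, fun {a} => isEmptyElim a.1⟩, fun a => isEmptyElim a.1⟩

lemma colorable_empty {X : Set V} (hX : X ⊆ ∅) : (G.induce X).Colorable 0 := by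
  have : IsEmpty (↥X) := ⟨fun a => (hX a.2).elim⟩
  exact ⟨⟨isEmptyElim, fun {a} => isEmptyElim a⟩⟩

lemma colorable_union {A B S : Set V} {m n : ℕ}
    (hA : (G.induce A).Colorable m) (hB : (G.induce B).Colorable n)
    (hS : S ⊆ A ∪ B) : (G.induce S).Colorable (m + n) := by
  classical
  obtain ⟨CA⟩ := hA
  obtain ⟨CB⟩ := hB
  have hcard : Fintype.card (Fin m ⊕ Fin n) = m + n := by simp
  refine hcard ▸ Coloring.colorable (Coloring.mk (fun x =>
    if h : (x : V) ∈ A then Sum.inl (CA ⟨x, h⟩)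
    else Sum.inr (CB ⟨x, (hS x.2).resolve_left h⟩)) ?_)
  intro x y hxy
  have hadj : G.Adj x.val y.val := hxy
  by_cases hx : (x : V) ∈ A <;> by_cases hy : (y : V) ∈ A <;> simp [hx, hy]
  · exact CA.valid (by exact hadj)
  · exact CB.valid (by exact hadj)

lemma colorable_biUnion {ι : Type} [DecidableEq ι] (s : Finset ι) (A : ι → Set V) (f : ι → ℕ)
    (hA : ∀ i ∈ s, (G.induce (A i)).Colorable (f i)) {S : Set V}
    (hS : S ⊆ ⋃ i ∈ s, A i) : (G.induce S).Colorable (∑ i ∈ s, f i) := by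
  classical
  induction s using Finset.induction generalizing S with
  | empty => exact colorable_empty (by simpa using hS)
  | insert _ _ hj ih =>
    rename_i j s'
    rw [Finset.sum_insert hj]
    refine colorable_union (hA j (Finset.mem_insert_self j s'))
      (ih (fun i hi => hA i (Finset.mem_insert_of_mem hi)) (subset_refl _)) ?_
    intro x hx
    have := hS hx
    simp only [Set.mem_iUnion, Finset.mem_insert] at this
    obtain ⟨i, hi, hxi⟩ := this
    rcases hi with rfl | hi
    · exact Or.inl hxi
    · exact Or.inr (by simp only [Set.mem_iUnion]; exact ⟨i, hi, hxi⟩)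

lemma colorable_induce_card {V : Type*} [Fintype V] (G : SimpleGraph V) (S : Set V) {n : ℕ}
    (hn : S.ncard ≤ n) : (G.induce S).Colorable n := by
  classical
  have h1 : (G.induce S).Colorable (Fintype.card ↥S) := colorable_of_fintype _
  refine h1.mono ?_
  rwa [← Nat.card_coe_set_eq, Nat.card_eq_fintype_card] at hn

lemma colorable_singleton (G : SimpleGraph V) (v : V) : (G.induce {v}).Colorable 1 := by
  have : Subsingleton (↥({v} : Set V)) := by
    constructor; rintro ⟨a, ha⟩ ⟨b, hb⟩
    simp only [Set.mem_singleton_iff] at ha hb; subst ha; subst hb; rfl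
  exact ⟨⟨fun _ => 0, fun {a b} hab => absurd (Subsingleton.elim a b) ((G.induce _).ne_of_adj hab)⟩⟩

lemma KK_extend {n t : ℕ} {X : Set V} (T : Finset V) (hT : T.card = t)
    (hadj : ∀ u ∈ T, ∀ x ∈ X, G.Adj u x) (hdisj : ∀ u ∈ T, u ∉ X)
    (h : ContainsSub (KK n t) (G.induce X)) : ContainsSub (KK (n+1) t) G := by
  classical
  obtain ⟨φ, hφ⟩ := h
  let e : Fin t → ↥T := (T.equivFinOfCardEq hT).symm
  let F : (Σ _ : Fin (n+1), Fin t) → V := fun p =>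
    if h : p.1.val < n then (φ ⟨⟨p.1.val, h⟩, p.2⟩ : ↥X).val else (e p.2 : V)
  have hmemX : ∀ (i : Fin n) (k : Fin t), ((φ ⟨i, k⟩ : ↥X) : V) ∈ X := fun i k => (φ ⟨i, k⟩).2
  have hmemT : ∀ k : Fin t, (e k : V) ∈ T := fun k => (e k).2
  have hF : ∀ a b : (Σ _ : Fin (n+1), Fin t), (KK (n+1) t).Adj a b → G.Adj (F a) (F b) := by
    rintro ⟨i, k⟩ ⟨j, l⟩ hab
    have hij : i ≠ j := hab
    simp only [F]
    by_cases hi : i.val < n <;> by_cases hj : j.val < n <;> simp only [hi, hj, dif_pos, dif_neg,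
      not_false_iff, dite_true, dite_false]
    · have : (KK n t).Adj ⟨⟨i.val, hi⟩, k⟩ ⟨⟨j.val, hj⟩, l⟩ :=
        fun hc => hij (Fin.ext (by simpa using congrArg (Fin.val : Fin n → ℕ) hc))
      exact φ.map_adj this
    · exact ((hadj _ (hmemT l) _ (hmemX _ _))).symm
    · exact hadj _ (hmemT k) _ (hmemX _ _)
    · exact absurd (Fin.ext (by omega : i.val = j.val)) hij
  refine ⟨⟨F, fun {a b} hab => hF a b hab⟩, ?_⟩
  rintro ⟨i, k⟩ ⟨j, l⟩ hab0
  have hab : F ⟨i, k⟩ = F ⟨j, l⟩ := hab0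
  simp only [F] at hab
  by_cases hi : i.val < n <;> by_cases hj : j.val < n <;>
    simp only [hi, hj, dif_pos, dif_neg, not_false_iff, dite_true, dite_false] at hab
  · have h2 := hφ (Subtype.ext hab : φ ⟨⟨i.val, hi⟩, k⟩ = φ ⟨⟨j.val, hj⟩, l⟩)
    rw [Sigma.mk.inj_iff] at h2
    refine Sigma.ext (Fin.ext ?_) h2.2
    simpa using congrArg (Fin.val : Fin n → ℕ) h2.1
  · exact absurd (hab ▸ hmemX ⟨i.val, hi⟩ k) (hdisj _ (hmemT l))
  · exact absurd (hab.symm ▸ hmemX ⟨j.val, hj⟩ l) (hdisj _ (hmemT k))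
  · have hkl : k = l := (Finset.equivFinOfCardEq hT).symm.injective (Subtype.ext hab)
    have hij : i = j := Fin.ext (by omega)
    subst hkl; subst hij; rfl

variable {α β : Type*} {H₁ : SimpleGraph α} {H₂ : SimpleGraph β}

lemma sum_emb_assemble {A B : Set V} (e₁ : H₁ ↪g G.induce A) (e₂ : H₂ ↪g G.induce B)
    (hcross : ∀ (x : α) (y : β), ¬ G.Adj ((e₁ x) : V) ((e₂ y) : V) ∧ ((e₁ x) : V) ≠ ((e₂ y) : V)) :
    Nonempty ((H₁.sum H₂) ↪g G) := by
  refine ⟨⟨⟨Sum.elim (fun x => ((e₁ x) : V)) (fun y => ((e₂ y) : V)), ?_⟩, ?_⟩⟩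
  · rintro (x | y) (x' | y') h
    · simp only [Sum.elim_inl] at h
      exact congrArg Sum.inl (e₁.injective (Subtype.ext h))
    · exact absurd h (hcross x y').2
    · exact absurd h.symm (hcross x' y).2
    · simp only [Sum.elim_inr] at h
      exact congrArg Sum.inr (e₂.injective (Subtype.ext h))
  · rintro (x | y) (x' | y')
    · exact e₁.map_rel_iff (a := x) (b := x')
    · simp only [Sum.elim_inl, Sum.elim_inr, Function.Embedding.coeFn_mk, sum_adj]
      exact ⟨fun h => absurd h (hcross x y').1, fun h => h.elim⟩
    · simp only [Sum.elim_inl, Sum.elim_inr, Function.Embedding.coeFn_mk, sum_adj]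
      exact ⟨fun h => absurd h.symm (hcross x' y).1, fun h => h.elim⟩
    · exact e₂.map_rel_iff (a := y) (b := y')

/-- the side of a vertex `u`: its neighborhood if `a` holds, the complement of its closed
neighborhood otherwise. -/
noncomputable def sideSet (G : SimpleGraph V) (u : V) (a : Prop) : Set V :=
  {x | (a ∧ G.Adj u x) ∨ (¬ a ∧ ¬ G.Adj u x ∧ x ≠ u)}

lemma sideSet_of_pos {u : V} {a : Prop} (ha : a) :
    sideSet G u a = G.neighborSet u := by
  ext x; simp [sideSet, ha, neighborSet]

lemma sideSet_of_neg {u : V} {a : Prop} (ha : ¬ a) :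
    sideSet G u a = {x | ¬ G.Adj u x ∧ x ≠ u} := by
  ext x; simp [sideSet, ha]

end Stmt14Aux

section Stmt14Main

open SimpleGraph

variable {V α β : Type} [Fintype V] [Fintype α] [Fintype β]
variable {H₁ : SimpleGraph α} {H₂ : SimpleGraph β} {G : SimpleGraph V}

lemma main_rec (t n p₁ p₂ P : ℕ) (ht : 1 ≤ t)
    (hH : IsEmpty ((H₁.sum H₂) ↪g G))
    (hK : ¬ ContainsSub (KK (n+1) t) G)
    (hprev : ∀ X : Set V, ¬ (G.induce X).Colorable P → ContainsSub (KK n t) (G.induce X))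
    (h1 : ∀ X : Set V, ¬ (G.induce X).Colorable p₁ → Nonempty (H₁ ↪g G.induce X))
    (h2 : ∀ X : Set V, ¬ (G.induce X).Colorable p₂ → Nonempty (H₂ ↪g G.induce X)) :
    ∀ (m : ℕ) (s : Finset (α ⊕ β)) (X : α ⊕ β → Set V) (v : α ⊕ β → V),
      s.card = m →
      (∀ i ∈ s, ¬ (G.induce (X i)).Colorable
        ((P + p₁ + (Fintype.card (α ⊕ β) + 1) * (p₂ + t + 2) + 10) *
          (Fintype.card β + t + 3) ^ m)) →
      (∀ i ∈ s, ∀ k, k ∉ s → X i ⊆ sideSet G (v k) ((H₁.sum H₂).Adj k i)) →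
      (∀ k, k ∉ s → ∀ l, l ∉ s → k ≠ l →
        ((G.Adj (v k) (v l) ↔ (H₁.sum H₂).Adj k l) ∧ v k ≠ v l)) →
      False := by
  classical
  set b := Fintype.card β with hb
  set c := Fintype.card (α ⊕ β) with hc
  set M := P + p₁ + (c + 1) * (p₂ + t + 2) + 10 with hM
  intro m
  induction m with
  | zero =>
    intro s X v hcard hcol hside hgood
    rw [Finset.card_eq_zero] at hcard
    subst hcard
    have hne : ∀ k l, k ≠ l → v k ≠ v l := fun k l h =>
      (hgood k (by simp) l (by simp) h).2
    have hinj : Function.Injective v := fun k l h => by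
      by_contra hkl; exact hne k l hkl h
    have hiff : ∀ k l : α ⊕ β, G.Adj (v k) (v l) ↔ (H₁.sum H₂).Adj k l := by
      intro k l
      by_cases h : k = l
      · subst h
        constructor
        · intro hadj; exact absurd hadj G.irrefl
        · intro hsadj; exact absurd hsadj (H₁.sum H₂).irrefl
      · exact (hgood k (by simp) l (by simp) h).1
    exact hH.false ⟨⟨v, hinj⟩, hiff _ _⟩
  | succ m ih =>
    intro s X v hcard hcol hside hgood
    have hsne : s.Nonempty := Finset.card_pos.mp (by omega)
    obtain ⟨j, hj⟩ := hsne
    set s' := s.erase j with hs'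
    have hs'card : s'.card = m := by
      rw [hs', Finset.card_erase_of_mem hj, hcard]
      omega
    set Λm := M * (b + t + 3) ^ m with hΛm
    set Λm1 := M * (b + t + 3) ^ (m + 1) with hΛm1
    have hMle : M ≤ Λm := Nat.le_mul_of_pos_right M (pow_pos (by omega) m)
    have hstep : Λm1 = Λm * (b + t + 3) := by rw [hΛm1, hΛm, pow_succ, mul_assoc]
    have hΛle : Λm ≤ Λm1 := by
      rw [hstep]; exact Nat.le_mul_of_pos_right Λm (by omega)
    set Bad : α ⊕ β → Set V := fun i =>
      {u | u ∈ X j ∧ (G.induce (X i ∩ sideSet G u ((H₁.sum H₂).Adj j i))).Colorable Λm}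
      with hBadDef
    have claim1 : ∀ i ∈ s', (G.induce (Bad i)).Colorable (p₂ + t) := by
      intro i hi'
      have hiS : i ∈ s := Finset.mem_of_mem_erase hi'
      have hXi := hcol i hiS
      by_cases hadj : (H₁.sum H₂).Adj j i
      · refine Colorable.mono (Nat.le_add_right p₂ t) ?_
        by_contra hcBad
        obtain ⟨e₂⟩ := h2 (Bad i) hcBad
        set Nbig : Set V := ⋃ (y : β), (G.neighborSet ((e₂ y : V)) ∪ {(e₂ y : V)}) with hNbig
        have hp0 : (G.induce (X i \ Nbig)).Colorable p₁ := by
          by_contra hc1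
          obtain ⟨e₁⟩ := h1 (X i \ Nbig) hc1
          refine hH.false (sum_emb_assemble e₁ e₂ ?_).some
          intro x y
          have hx : ((e₁ x : V)) ∈ X i \ Nbig := (e₁ x).2
          have hnin : ((e₁ x : V)) ∉ G.neighborSet ((e₂ y : V)) ∪ {(e₂ y : V)} := by
            intro hmem
            exact hx.2 (Set.mem_iUnion.mpr ⟨y, hmem⟩)
          constructor
          · intro hadj'
            exact hnin (Or.inl hadj'.symm)
          · intro heq
            exact hnin (Or.inr (by simp [heq]))
        have hpieces : ∀ y ∈ (Finset.univ : Finset β),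
            (G.induce ((X i ∩ G.neighborSet ((e₂ y : V))) ∪ {(e₂ y : V)})).Colorable (Λm + 1) := by
          intro y _
          have hmem := (e₂ y).2
          have hcolo : (G.induce (X i ∩ sideSet G ((e₂ y : V)) ((H₁.sum H₂).Adj j i))).Colorable Λm :=
            hmem.2
          rw [sideSet_of_pos hadj] at hcolo
          exact colorable_union hcolo (colorable_singleton G _) (subset_refl _)
        have hbigcol : (G.induce (⋃ y ∈ (Finset.univ : Finset β),
            ((X i ∩ G.neighborSet ((e₂ y : V))) ∪ {(e₂ y : V)}))).Colorable (b * (Λm + 1)) := by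
          have := colorable_biUnion (Finset.univ : Finset β)
            (fun y => (X i ∩ G.neighborSet ((e₂ y : V))) ∪ {(e₂ y : V)})
            (fun _ => Λm + 1) hpieces (subset_refl _)
          simpa [Finset.sum_const, Finset.card_univ, hb, mul_comm] using this
        have hcov : X i ⊆ (X i \ Nbig) ∪ (⋃ y ∈ (Finset.univ : Finset β),
            ((X i ∩ G.neighborSet ((e₂ y : V))) ∪ {(e₂ y : V)})) := by
          intro x hx
          by_cases hxN : x ∈ Nbig
          · obtain ⟨y, hy⟩ := Set.mem_iUnion.mp hxN
            refine Or.inr (Set.mem_biUnion (Finset.mem_univ y) ?_)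
            rcases hy with hy | hy
            · exact Or.inl ⟨hx, hy⟩
            · exact Or.inr hy
          · exact Or.inl ⟨hx, hxN⟩
        have : (G.induce (X i)).Colorable (p₁ + b * (Λm + 1)) :=
          colorable_union hp0 hbigcol hcov
        refine hXi (this.mono ?_)
        -- p₁ + b * (Λm + 1) ≤ Λm1
        have h1' : p₁ + b ≤ M := by
          have : b + 1 ≤ (c + 1) * (p₂ + t + 2) := by
            have hbc : b ≤ c := by
              rw [hb, hc, Fintype.card_sum]; omega
            nlinarith
          omega
        calc p₁ + b * (Λm + 1) = p₁ + b + b * Λm := by ring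
          _ ≤ Λm + b * Λm := by
              have := le_trans h1' hMle; omega
          _ ≤ Λm * (b + t + 3) := by nlinarith
          _ = Λm1 := hstep.symm
      · -- non-adjacent case
        have hsmall : (Bad i).ncard ≤ p₂ + t := by
          by_contra hbig
          push_neg at hbig
          have htle : t ≤ (Bad i).ncard := by omega
          have hfin : (Bad i).Finite := Set.toFinite _
          have htle' : t ≤ hfin.toFinset.card := by
            rwa [Set.ncard_eq_toFinset_card _ hfin] at htle
          obtain ⟨T, hTsub, hTcard⟩ := Finset.exists_subset_card_eq htle'
          have hTBad : ∀ u ∈ T, u ∈ Bad i := by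
            intro u hu
            have := hTsub hu
            rwa [Set.Finite.mem_toFinset] at this
          set Xstar : Set V := (X i ∩ ⋂ u ∈ T, G.neighborSet u) \ ↑T with hXstar
          have hXstarCol : (G.induce Xstar).Colorable P := by
            by_contra hcP
            refine hK (KK_extend T hTcard ?_ ?_ (hprev Xstar hcP))
            · intro u hu x hx
              have hx1 := hx.1.2
              simp only [Set.mem_iInter] at hx1
              exact hx1 u hu
            · intro u hu hmem
              exact hmem.2 (by simpa using hu)
          have hcovN : X i ⊆ (Xstar ∪ ↑T) ∪
              (⋃ u ∈ T, (X i ∩ sideSet G u ((H₁.sum H₂).Adj j i))) := by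
            intro x hx
            by_cases hxT : x ∈ (↑T : Set V)
            · exact Or.inl (Or.inr hxT)
            · by_cases hall : ∀ u ∈ T, G.Adj u x
              · refine Or.inl (Or.inl ⟨⟨hx, ?_⟩, hxT⟩)
                simp only [Set.mem_iInter]
                exact fun u hu => hall u hu
              · push_neg at hall
                obtain ⟨u, huT, hun⟩ := hall
                refine Or.inr (Set.mem_biUnion huT ?_)
                refine ⟨hx, ?_⟩
                rw [sideSet_of_neg hadj]
                exact ⟨hun, fun hxu => hxT (hxu ▸ by simpa using huT)⟩
          have hTcol : (G.induce (↑T : Set V)).Colorable t := by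
            refine colorable_induce_card G _ ?_
            simp [Set.ncard_coe_finset, hTcard]
          have hUcol : (G.induce (⋃ u ∈ T, (X i ∩ sideSet G u ((H₁.sum H₂).Adj j i)))).Colorable
              (t * Λm) := by
            have := colorable_biUnion T (fun u => X i ∩ sideSet G u ((H₁.sum H₂).Adj j i))
              (fun _ => Λm) (fun u hu => (hTBad u hu).2) (subset_refl _)
            simpa [Finset.sum_const, hTcard, mul_comm] using this
          have : (G.induce (X i)).Colorable ((P + t) + t * Λm) :=
            colorable_union (colorable_union hXstarCol hTcol (subset_refl _)) hUcol hcovN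
          refine hXi (this.mono ?_)
          have h2' : P + t ≤ M := by nlinarith
          calc P + t + t * Λm ≤ Λm + t * Λm := by
                have := le_trans h2' hMle; omega
            _ ≤ Λm * (b + t + 3) := by nlinarith
            _ = Λm1 := hstep.symm
        exact colorable_induce_card G _ hsmall
    -- free vertex
    have claim2 : ∃ u, u ∈ X j ∧ ∀ i ∈ s',
        ¬ (G.induce (X i ∩ sideSet G u ((H₁.sum H₂).Adj j i))).Colorable Λm := by
      by_contra hno
      push_neg at hno
      have hcov : X j ⊆ ⋃ i ∈ s', Bad i := by
        intro u hu
        obtain ⟨i, hi, hcolu⟩ := hno u hu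
        exact Set.mem_biUnion hi ⟨hu, hcolu⟩
      have := colorable_biUnion s' Bad (fun _ => p₂ + t) claim1 hcov
      rw [Finset.sum_const, hs'card] at this
      refine hcol j hj (this.mono ?_)
      have hmc : m ≤ c := by
        have : s.card ≤ c := by
          rw [hc, ← Finset.card_univ]
          exact Finset.card_le_univ s
        omega
      have : m * (p₂ + t) ≤ M := by nlinarith
      calc m • (p₂ + t) = m * (p₂ + t) := by simp
        _ ≤ M := this
        _ ≤ Λm := hMle
        _ ≤ Λm1 := hΛle
    obtain ⟨u, huX, hu⟩ := claim2
    refine ih s' (fun i => X i ∩ sideSet G u ((H₁.sum H₂).Adj j i))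
      (Function.update v j u) hs'card hu ?_ ?_
    · -- side invariant
      intro i hi' k hk'
      by_cases hkj : k = j
      · subst hkj
        rw [Function.update_self]
        exact Set.inter_subset_right
      · have hks : k ∉ s := fun hks => hk' (Finset.mem_erase.mpr ⟨hkj, hks⟩)
        rw [Function.update_of_ne hkj]
        exact (Set.inter_subset_left).trans (hside i (Finset.mem_of_mem_erase hi') k hks)
    · -- good pairs
      intro k hk' l hl' hkl
      by_cases hkj : k = j <;> by_cases hlj : l = j
      · subst hkj; subst hlj; exact absurd rfl hkl
      · subst hkj
        rw [Function.update_self, Function.update_of_ne hlj]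
        have hls : l ∉ s := fun hls => hl' (Finset.mem_erase.mpr ⟨hlj, hls⟩)
        have hmem : u ∈ sideSet G (v l) ((H₁.sum H₂).Adj l k) := hside k hj l hls huX
        by_cases hladj : (H₁.sum H₂).Adj l k
        · rw [sideSet_of_pos hladj] at hmem
          have hadj' : G.Adj (v l) u := hmem
          exact ⟨iff_of_true hadj'.symm hladj.symm, hadj'.ne'⟩
        · rw [sideSet_of_neg hladj] at hmem
          refine ⟨iff_of_false (fun h => hmem.1 h.symm) (fun h => hladj h.symm), hmem.2⟩
      · subst hlj
        rw [Function.update_self, Function.update_of_ne hkj]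
        have hks : k ∉ s := fun hks => hk' (Finset.mem_erase.mpr ⟨hkj, hks⟩)
        have hmem : u ∈ sideSet G (v k) ((H₁.sum H₂).Adj k l) := hside l hj k hks huX
        by_cases hkadj : (H₁.sum H₂).Adj k l
        · rw [sideSet_of_pos hkadj] at hmem
          have hadj' : G.Adj (v k) u := hmem
          exact ⟨iff_of_true hadj' hkadj, fun h => hadj'.ne' h.symm⟩
        · rw [sideSet_of_neg hkadj] at hmem
          refine ⟨iff_of_false hmem.1 hkadj, fun h => hmem.2 h.symm⟩
      · rw [Function.update_of_ne hkj, Function.update_of_ne hlj]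
        have hks : k ∉ s := fun hks => hk' (Finset.mem_erase.mpr ⟨hkj, hks⟩)
        have hls : l ∉ s := fun hls => hl' (Finset.mem_erase.mpr ⟨hlj, hls⟩)
        exact hgood k hks l hls hkl


lemma main_col (t n p₁ p₂ P : ℕ) (ht : 1 ≤ t)
    (hH : IsEmpty ((H₁.sum H₂) ↪g G))
    (hK : ¬ ContainsSub (KK (n+1) t) G)
    (hprev : ∀ X : Set V, ¬ (G.induce X).Colorable P → ContainsSub (KK n t) (G.induce X))
    (h1 : ∀ X : Set V, ¬ (G.induce X).Colorable p₁ → Nonempty (H₁ ↪g G.induce X))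
    (h2 : ∀ X : Set V, ¬ (G.induce X).Colorable p₂ → Nonempty (H₂ ↪g G.induce X)) :
    G.Colorable ((P + p₁ + (Fintype.card (α ⊕ β) + 1) * (p₂ + t + 2) + 10) *
      (Fintype.card β + t + 3) ^ (Fintype.card (α ⊕ β))) := by
  classical
  by_contra hG
  have hV : Nonempty V := by
    by_contra hne
    have hE : IsEmpty V := not_nonempty_iff.mp hne
    exact hG ⟨⟨fun x => isEmptyElim x, fun {a} => isEmptyElim a⟩⟩
  obtain ⟨v0⟩ := hV
  refine main_rec t n p₁ p₂ P ht hH hK hprev h1 h2 (Fintype.card (α ⊕ β)) Finset.univ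
    (fun _ => Set.univ) (fun _ => v0) Finset.card_univ ?_ ?_ ?_
  · intro i _ hcontra
    exact hG (Colorable.of_hom (induceUnivIso G).symm.toEmbedding.toHom hcontra)
  · intro i _ k hk
    exact absurd (Finset.mem_univ k) hk
  · intro k hk
    exact absurd (Finset.mem_univ k) hk

end Stmt14Main

section Stmt14Wrap

open SimpleGraph

variable {α β : Type} [Fintype α] [Fintype β] {H₁ : SimpleGraph α} {H₂ : SimpleGraph β}

lemma step_lemma (h1 : Multibounding H₁) (h2 : Multibounding H₂) (n : ℕ) (fprev : Polynomial ℕ)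
    (hprev : ∀ t : ℕ, 1 ≤ t → ∀ (V : Type) [Fintype V] (G : SimpleGraph V),
      IsEmpty ((H₁.sum H₂) ↪g G) → ¬ ContainsSub (KK n t) G →
        G.chromaticNumber ≤ ((fprev.eval t : ℕ) : ℕ∞)) :
    ∃ f : Polynomial ℕ, ∀ t : ℕ, 1 ≤ t → ∀ (V : Type) [Fintype V] (G : SimpleGraph V),
      IsEmpty ((H₁.sum H₂) ↪g G) → ¬ ContainsSub (KK (n+1) t) G →
        G.chromaticNumber ≤ ((f.eval t : ℕ) : ℕ∞) := by
  classical
  obtain ⟨f₁, hf₁⟩ := h1 (n+1) (by omega)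
  obtain ⟨f₂, hf₂⟩ := h2 (n+1) (by omega)
  set c := Fintype.card (α ⊕ β) with hc
  set b := Fintype.card β with hb
  refine ⟨(fprev + f₁ + (Polynomial.C (c+1)) * (f₂ + Polynomial.X + Polynomial.C 2) +
    Polynomial.C 10) * (Polynomial.X + Polynomial.C (b+3)) ^ c, ?_⟩
  intro t ht V _ G hH hK
  set P := fprev.eval t with hP
  set p₁ := f₁.eval t with hp₁
  set p₂ := f₂.eval t with hp₂
  have heval : ((fprev + f₁ + (Polynomial.C (c+1)) * (f₂ + Polynomial.X + Polynomial.C 2) +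
      Polynomial.C 10) * (Polynomial.X + Polynomial.C (b+3)) ^ c).eval t =
      (P + p₁ + (c + 1) * (p₂ + t + 2) + 10) * (b + t + 3) ^ c := by
    simp only [hP, hp₁, hp₂]
    simp [Polynomial.eval_mul, Polynomial.eval_add, Polynomial.eval_pow]
    ring_nf
  rw [heval]
  rw [chromaticNumber_le_iff_colorable]
  have hprev' : ∀ X : Set V, ¬ (G.induce X).Colorable P →
      ContainsSub (KK n t) (G.induce X) := by
    intro X hX
    by_contra hC
    haveI : Fintype ↥X := (Set.toFinite X).fintype
    have := hprev t ht ↥X (G.induce X) (isEmpty_emb_induce hH) hC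
    rw [chromaticNumber_le_iff_colorable] at this
    exact hX this
  have h1' : ∀ X : Set V, ¬ (G.induce X).Colorable p₁ → Nonempty (H₁ ↪g G.induce X) := by
    intro X hX
    by_contra hC
    haveI : Fintype ↥X := (Set.toFinite X).fintype
    have hKX : ¬ ContainsSub (KK (n+1) t) (G.induce X) := fun h => hK (containsSub_of_induce h)
    have := hf₁ t ht ↥X (G.induce X) (not_nonempty_iff.mp hC) hKX
    rw [chromaticNumber_le_iff_colorable] at this
    exact hX this
  have h2' : ∀ X : Set V, ¬ (G.induce X).Colorable p₂ → Nonempty (H₂ ↪g G.induce X) := by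
    intro X hX
    by_contra hC
    haveI : Fintype ↥X := (Set.toFinite X).fintype
    have hKX : ¬ ContainsSub (KK (n+1) t) (G.induce X) := fun h => hK (containsSub_of_induce h)
    have := hf₂ t ht ↥X (G.induce X) (not_nonempty_iff.mp hC) hKX
    rw [chromaticNumber_le_iff_colorable] at this
    exact hX this
  exact main_col t n p₁ p₂ P ht hH hK hprev' h1' h2'

end Stmt14Wrap


theorem stmt14 {α β : Type} [Fintype α] [Fintype β]
    (H₁ : SimpleGraph α) (H₂ : SimpleGraph β)
    (h1 : Multibounding H₁) (h2 : Multibounding H₂) :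
    Multibounding (H₁.sum H₂) := by
  have key : ∀ n : ℕ, ∃ f : Polynomial ℕ, ∀ t : ℕ, 1 ≤ t →
      ∀ (V : Type) [Fintype V] (G : SimpleGraph V),
      IsEmpty ((H₁.sum H₂) ↪g G) → ¬ ContainsSub (KK (n+1) t) G →
        G.chromaticNumber ≤ ((f.eval t : ℕ) : ℕ∞) := by
    intro n
    induction n with
    | zero =>
      refine step_lemma h1 h2 0 0 ?_
      intro t ht V _ G hH hK
      exact absurd (containsSub_KK_zero t G) hK
    | succ n ih =>
      obtain ⟨fprev, hfprev⟩ := ih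
      exact step_lemma h1 h2 (n+1) fprev hfprev
  intro d hd
  obtain ⟨n, rfl⟩ : ∃ n, d = n + 1 := ⟨d - 1, by omega⟩
  exact key n
end
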